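/- arXiv:1308.0640 — 10 statements merged into one kernel-verified Lean document; each statement's English description precedes it below -/
import Mathlib

section
/- Let α ∈ (0,2), let c_α = 2^α Γ(1+α/2) / (π |Γ(−α/2)|), and let φ : ℝ² → ℝ be a smooth 2πℤ²-periodic function. Then for every x ∈ ℝ²: (i) the principal value L₁(x) = lim_{ε→0⁺} ∫_{|y|≥ε} (φ(x) − φ(x+y)) · c_α |y|^{−(2+α)} dy exists and is finite; (ii) the principal value L₂(x) = lim_{ε→0⁺} ∫_{|y|≥ε} (φ(x)² − φ(x+y)²) · c_α |y|^{−(2+α)} dy exists and is finite; (iii) the integral D_α[φ](x) = ∫_{ℝ²} (φ(x) − φ(x+y))² · c_α |y|^{−(2+α)} dy is finite; and (iv) the pointwise identity 2 φ(x) L₁(x) = L₂(x) + D_α[φ](x) holds. -/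
open Real MeasureTheory Filter Topology

/-- The normalization constant `c_α = 2^α Γ(1+α/2) / (π |Γ(−α/2)|)`. -/
noncomputable def fracLapConst (α : ℝ) : ℝ :=
  2 ^ α * Real.Gamma (1 + α / 2) / (π * |Real.Gamma (-(α / 2))|)

noncomputable section
local notation "E2" => EuclideanSpace ℝ (Fin 2)

lemma aux_int_ball {α : ℝ} (h0 : 0 < α) (h2 : α < 2) :
    IntegrableOn (fun y : E2 => ‖y‖ ^ (-α)) (Metric.ball 0 1) volume := by
  have hmeas : Measurable (fun y : E2 => ‖y‖ ^ (-α)) := by fun_prop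
  constructor
  · exact hmeas.aestronglyMeasurable
  · have hnn : ∀ y : E2, 0 ≤ ‖y‖ ^ (-α) := fun y => rpow_nonneg (norm_nonneg y) _
    rw [hasFiniteIntegral_iff_ofReal (ae_of_all _ hnn)]
    set μr := volume.restrict (Metric.ball (0:E2) 1)
    rw [lintegral_eq_lintegral_meas_le μr (ae_of_all _ hnn) hmeas.aemeasurable]
    set mB := volume (Metric.ball (0:E2) 1) with hmB
    have hmBfin : mB < ⊤ := measure_ball_lt_top
    calc ∫⁻ t in Set.Ioi (0:ℝ), μr {a | t ≤ ‖a‖ ^ (-α)}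
        ≤ ∫⁻ t in Set.Ioc (0:ℝ) 1 ∪ Set.Ioi 1, μr {a | t ≤ ‖a‖ ^ (-α)} :=
          lintegral_mono_set Set.Ioi_subset_Ioc_union_Ioi
      _ ≤ (∫⁻ t in Set.Ioc (0:ℝ) 1, μr {a | t ≤ ‖a‖ ^ (-α)}) +
          ∫⁻ t in Set.Ioi (1:ℝ), μr {a | t ≤ ‖a‖ ^ (-α)} := lintegral_union_le _ _ _
      _ < ⊤ := by
          rw [ENNReal.add_lt_top]
          constructor
          · calc (∫⁻ t in Set.Ioc (0:ℝ) 1, μr {a | t ≤ ‖a‖ ^ (-α)})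
                ≤ ∫⁻ _t in Set.Ioc (0:ℝ) 1, mB := by
                  refine lintegral_mono fun t => ?_
                  refine le_trans (measure_mono (Set.subset_univ _)) ?_
                  simp [μr, hmB, Measure.restrict_apply_univ]
              _ = mB * volume (Set.Ioc (0:ℝ) 1) := by rw [setLIntegral_const]
              _ < ⊤ := by
                  refine ENNReal.mul_lt_top hmBfin ?_
                  simp
          · have hsub : ∀ t : ℝ, 1 < t →
                {a : E2 | t ≤ ‖a‖ ^ (-α)} ⊆ Metric.closedBall 0 (t ^ (-α⁻¹)) := by
              intro t ht a ha
              simp only [Set.mem_setOf_eq] at ha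
              simp only [Metric.mem_closedBall, dist_zero_right]
              rcases eq_or_ne a 0 with rfl | h
              · simp only [norm_zero] at ha ⊢
                rw [Real.zero_rpow (neg_ne_zero.mpr h0.ne')] at ha
                linarith
              · have hpos : 0 < ‖a‖ := norm_pos_iff.mpr h
                have := Real.rpow_le_rpow_of_nonpos (by positivity) ha
                  (by simp [inv_nonneg, h0.le] : -α⁻¹ ≤ 0)
                rwa [← Real.rpow_mul (norm_nonneg a), neg_mul_neg,
                  mul_inv_cancel₀ h0.ne', Real.rpow_one] at this
            calc (∫⁻ t in Set.Ioi (1:ℝ), μr {a | t ≤ ‖a‖ ^ (-α)})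
                ≤ ∫⁻ t in Set.Ioi (1:ℝ), ENNReal.ofReal (t ^ (-(2/α))) * mB := by
                  refine setLIntegral_mono' measurableSet_Ioi fun t ht => ?_
                  have ht1 : (1:ℝ) < t := ht
                  refine le_trans (measure_mono (hsub t ht1)) ?_
                  refine le_trans (le_trans (Measure.restrict_le_self _) (le_of_eq ?_)) le_rfl
                  rw [Measure.addHaar_closedBall volume _ (rpow_nonneg (by linarith) _),
                    finrank_euclideanSpace]
                  congr 2
                  rw [← Real.rpow_natCast (t ^ (-α⁻¹)), ← Real.rpow_mul (by linarith : (0:ℝ) ≤ t)]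
                  congr 1
                  rw [Fintype.card_fin]
                  push_cast
                  ring
              _ = (∫⁻ t in Set.Ioi (1:ℝ), ENNReal.ofReal (t ^ (-(2/α)))) * mB :=
                  lintegral_mul_const' _ _ hmBfin.ne
              _ < ⊤ := by
                  refine ENNReal.mul_lt_top ?_ hmBfin
                  refine IntegrableOn.setLIntegral_lt_top ?_
                  refine integrableOn_Ioi_rpow_of_lt ?_ one_pos
                  rw [neg_lt_neg_iff]
                  rw [lt_div_iff₀ h0]
                  linarith

lemma aux_int_tail {α : ℝ} (h0 : 0 < α) :
    IntegrableOn (fun y : E2 => ‖y‖ ^ (-(2 + α))) {y : E2 | 1 ≤ ‖y‖} volume := by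
  have hbig : Integrable (fun y : E2 => (2:ℝ) ^ (2+α) * (1 + ‖y‖) ^ (-(2+α))) volume := by
    refine Integrable.const_mul ?_ _
    refine integrable_one_add_norm ?_
    rw [finrank_euclideanSpace, Fintype.card_fin]
    push_cast; linarith
  refine (hbig.integrableOn).mono' ?_ ?_
  · exact (by fun_prop : Measurable (fun y : E2 => ‖y‖ ^ (-(2+α)))).aestronglyMeasurable.restrict
  · rw [ae_restrict_iff' (isClosed_le continuous_const continuous_norm).measurableSet]
    refine ae_of_all _ fun y hy => ?_
    have h1 : (1:ℝ) ≤ ‖y‖ := hy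
    rw [Real.norm_eq_abs, abs_of_nonneg (rpow_nonneg (norm_nonneg y) _)]
    have key : ‖y‖ ^ (-(2+α)) ≤ ((1 + ‖y‖)/2) ^ (-(2+α)) := by
      refine Real.rpow_le_rpow_of_nonpos (by linarith) (by linarith) (by linarith)
    refine key.trans (le_of_eq ?_)
    rw [Real.div_rpow (by linarith) (by norm_num), div_eq_mul_inv, ← Real.rpow_neg (by norm_num),
      neg_neg, mul_comm]

lemma aux_int_annulus {α ε : ℝ} (h0 : 0 < α) (hε : 0 < ε) :
    IntegrableOn (fun y : E2 => ‖y‖ ^ (-(2 + α))) {y : E2 | ε ≤ ‖y‖} volume := by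
  have hA : IntegrableOn (fun y : E2 => ‖y‖ ^ (-(2 + α)))
      ({y : E2 | ε ≤ ‖y‖} ∩ Metric.closedBall 0 1) volume := by
    refine Measure.integrableOn_of_bounded (M := ε ^ (-(2+α))) ?_ ?_ ?_
    · exact ne_of_lt (lt_of_le_of_lt (measure_mono Set.inter_subset_right) measure_closedBall_lt_top)
    · exact (by fun_prop : Measurable (fun y : E2 => ‖y‖ ^ (-(2+α)))).aestronglyMeasurable
    · rw [ae_restrict_iff' (((isClosed_le continuous_const continuous_norm).measurableSet).inter
        measurableSet_closedBall)]
      refine ae_of_all _ fun y hy => ?_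
      rw [Real.norm_eq_abs, abs_of_nonneg (rpow_nonneg (norm_nonneg y) _)]
      exact Real.rpow_le_rpow_of_nonpos hε hy.1 (by linarith)
  have hsub : {y : E2 | ε ≤ ‖y‖} ⊆
      ({y : E2 | ε ≤ ‖y‖} ∩ Metric.closedBall 0 1) ∪ {y : E2 | 1 ≤ ‖y‖} := by
    intro y hy
    rcases le_or_gt ‖y‖ 1 with h | h
    · exact Or.inl ⟨hy, by simpa [Metric.mem_closedBall, dist_zero_right] using h⟩
    · exact Or.inr h.le
  exact (hA.union (aux_int_tail h0)).mono_set hsub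

lemma aux_intOn_of_bounded {α ε : ℝ} (h0 : 0 < α) (hε : 0 < ε) {f : E2 → ℝ}
    (hm : AEStronglyMeasurable f volume) {B : ℝ}
    (hb : ∀ y : E2, |f y| ≤ B * ‖y‖ ^ (-(2 + α))) :
    IntegrableOn f {y : E2 | ε ≤ ‖y‖} volume := by
  refine (((aux_int_annulus h0 hε).const_mul B)).mono' hm.restrict (ae_of_all _ fun y => ?_)
  rw [Real.norm_eq_abs]; exact hb y

lemma aux_integrable_of_bounds {α : ℝ} (h0 : 0 < α) (h2 : α < 2) {f : E2 → ℝ}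
    (hm : AEStronglyMeasurable f volume) {C M : ℝ}
    (h1 : ∀ y : E2, ‖y‖ < 1 → |f y| ≤ C * ‖y‖ ^ (-α))
    (htail : ∀ y : E2, 1 ≤ ‖y‖ → |f y| ≤ M * ‖y‖ ^ (-(2 + α))) :
    Integrable f volume := by
  rw [← integrableOn_univ]
  have huniv : (Set.univ : Set E2) = Metric.ball 0 1 ∪ {y : E2 | 1 ≤ ‖y‖} := by
    ext y
    simp only [Set.mem_univ, Set.mem_union, Metric.mem_ball, dist_zero_right, Set.mem_setOf_eq,
      true_iff]
    exact (lt_or_ge ‖y‖ 1)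
  rw [huniv]
  refine IntegrableOn.union ?_ ?_
  · refine ((aux_int_ball h0 h2).const_mul C).mono' hm.restrict ?_
    rw [ae_restrict_iff' measurableSet_ball]
    refine ae_of_all _ fun y hy => ?_
    rw [Real.norm_eq_abs]
    exact h1 y (by simpa [Metric.mem_ball, dist_zero_right] using hy)
  · refine ((aux_int_tail h0).const_mul M).mono' hm.restrict ?_
    rw [ae_restrict_iff' (isClosed_le continuous_const continuous_norm).measurableSet]
    refine ae_of_all _ fun y hy => ?_
    rw [Real.norm_eq_abs]
    exact htail y hy

lemma aux_bounded {φ : E2 → ℝ} (hc : Continuous φ)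
    (hper : ∀ (x : E2) (k : Fin 2 → ℤ),
      φ (x + (EuclideanSpace.equiv (Fin 2) ℝ).symm (fun i => 2 * π * (k i : ℝ))) = φ x) :
    ∃ M : ℝ, 0 ≤ M ∧ ∀ z : E2, |φ z| ≤ M := by
  obtain ⟨M, hM⟩ := (isCompact_closedBall (0:E2) 7).exists_bound_of_continuousOn hc.continuousOn
  refine ⟨M, le_trans (abs_nonneg _) (by simpa using hM 0 (Metric.mem_closedBall_self (by norm_num))), fun z => ?_⟩
  set k : Fin 2 → ℤ := fun i => -round (z i / (2 * π)) with hk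
  set z' : E2 := z + (EuclideanSpace.equiv (Fin 2) ℝ).symm (fun i => 2 * π * (k i : ℝ)) with hz'
  have hφz : φ z' = φ z := hper z k
  have hcoord : ∀ i : Fin 2, |z' i| ≤ π := by
    intro i
    have h1 : z' i = z i + 2 * π * (k i : ℝ) := rfl
    have h2 : |z i / (2 * π) - round (z i / (2 * π))| ≤ 1 / 2 := abs_sub_round _
    have hπ : (0:ℝ) < 2 * π := by positivity
    have h3 : z i + 2 * π * (k i : ℝ) = (2 * π) * (z i / (2 * π) - round (z i / (2 * π))) := by
      rw [hk]; push_cast; field_simp; ring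
    rw [h1, h3, abs_mul, abs_of_pos hπ]
    calc 2 * π * |z i / (2 * π) - ↑(round (z i / (2 * π)))| ≤ 2 * π * (1/2) := by
          exact mul_le_mul_of_nonneg_left h2 hπ.le
      _ = π := by ring
  have hnorm : ‖z'‖ ≤ 7 := by
    rw [EuclideanSpace.norm_eq]
    have : ∑ i : Fin 2, ‖z' i‖ ^ 2 ≤ 49 := by
      rw [Fin.sum_univ_two]
      have h0 := hcoord 0
      have h1 := hcoord 1
      have hπ4 := Real.pi_le_four
      have hπ0 := Real.pi_pos
      simp only [Real.norm_eq_abs]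
      nlinarith [abs_nonneg (z' 0), abs_nonneg (z' 1), sq_abs (z' 0), sq_abs (z' 1)]
    calc √(∑ i : Fin 2, ‖z' i‖ ^ 2) ≤ √49 := Real.sqrt_le_sqrt this
      _ = 7 := by
        rw [show (49:ℝ) = 7 ^ 2 by norm_num, Real.sqrt_sq (by norm_num)]
  calc |φ z| = ‖φ z'‖ := by rw [hφz, Real.norm_eq_abs]
    _ ≤ M := hM z' (by simpa [Metric.mem_closedBall, dist_zero_right] using hnorm)

lemma aux_taylor {φ : E2 → ℝ} (hφ : ContDiff ℝ (⊤ : ℕ∞) φ) (x : E2) :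
    ∃ C₁ C₂ : ℝ, 0 ≤ C₁ ∧ 0 ≤ C₂ ∧
      (∀ y : E2, ‖y‖ ≤ 1 → |φ x - φ (x + y)| ≤ C₁ * ‖y‖) ∧
      (∀ y : E2, ‖y‖ ≤ 1 → |2 * φ x - φ (x + y) - φ (x - y)| ≤ C₂ * ‖y‖ ^ 2) := by
  have hdiff : Differentiable ℝ φ := hφ.differentiable (by simp)
  set ψ : E2 → (E2 →L[ℝ] ℝ) := fderiv ℝ φ with hψ
  have hψc : ContDiff ℝ (⊤ : ℕ∞) ψ := hφ.fderiv_right (by simp)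
  obtain ⟨C₁, hC₁⟩ := (isCompact_closedBall x 1).exists_bound_of_continuousOn
    hψc.continuous.continuousOn
  have hC₁0 : 0 ≤ C₁ := le_trans (norm_nonneg _) (hC₁ x (Metric.mem_closedBall_self zero_le_one))
  obtain ⟨L, hL⟩ := (isCompact_closedBall x 1).exists_bound_of_continuousOn
    (hψc.fderiv_right (m := (⊤ : ℕ∞)) (by simp)).continuous.continuousOn
  have hL0 : 0 ≤ L := le_trans (norm_nonneg _) (hL x (Metric.mem_closedBall_self zero_le_one))
  have hψlip : ∀ a ∈ Metric.closedBall x 1, ∀ b ∈ Metric.closedBall x 1,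
      ‖ψ a - ψ b‖ ≤ L * ‖a - b‖ := by
    intro a ha b hb
    exact (convex_closedBall x 1).norm_image_sub_le_of_norm_fderiv_le
      (fun z _ => hψc.differentiable (by simp) z) hL hb ha
  refine ⟨C₁, 2 * L, hC₁0, by linarith, ?_, ?_⟩
  · intro y hy
    have hmem : x + y ∈ Metric.closedBall x 1 := by
      simp [Metric.mem_closedBall, dist_eq_norm]; simpa using hy
    have := (convex_closedBall x 1).norm_image_sub_le_of_norm_fderiv_le
      (fun z _ => hdiff z) hC₁ (Metric.mem_closedBall_self zero_le_one) hmem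
    rw [abs_sub_comm, ← Real.norm_eq_abs]
    simpa using this
  · intro y hy
    set F : E2 → ℝ := fun z => φ (x + z) + φ (x - z) with hF
    have hder : ∀ z : E2, HasFDerivAt F (ψ (x + z) - ψ (x - z)) z := by
      intro z
      have h1 : HasFDerivAt (fun w : E2 => φ (x + w)) (ψ (x + z)) z := by
        have := (hdiff (x + z)).hasFDerivAt.comp z ((hasFDerivAt_id z).const_add x)
        simp at this; exact this
      have h2 : HasFDerivAt (fun w : E2 => φ (x - w)) (-ψ (x - z)) z := by
        have := (hdiff (x - z)).hasFDerivAt.comp z ((hasFDerivAt_id z).const_sub x)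
        exact this.congr_fderiv (by ext v; simp [hψ])
      have := h1.add h2
      simp only [sub_eq_add_neg] at this ⊢; exact this
    have key := (convex_closedBall (0:E2) ‖y‖).norm_image_sub_le_of_norm_hasFDerivWithin_le
      (f' := fun z => ψ (x + z) - ψ (x - z)) (C := 2 * L * ‖y‖)
      (fun z _ => (hder z).hasFDerivWithinAt) ?_
      (Metric.mem_closedBall_self (norm_nonneg y))
      (by simp [Metric.mem_closedBall, dist_zero_right] : y ∈ Metric.closedBall 0 ‖y‖)
    · have hF0 : F 0 = φ x + φ x := by simp [hF]
      have hFy : F y = φ (x + y) + φ (x - y) := rfl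
      rw [hF0, hFy] at key
      calc |2 * φ x - φ (x + y) - φ (x - y)| = ‖(φ (x + y) + φ (x - y)) - (φ x + φ x)‖ := by
            rw [Real.norm_eq_abs, abs_sub_comm]; congr 1; ring
        _ ≤ 2 * L * ‖y‖ * ‖y - (0:E2)‖ := key
        _ = 2 * L * ‖y‖ ^ 2 := by rw [sub_zero]; ring
    · intro z hz
      have hz1 : ‖z‖ ≤ ‖y‖ := by simpa [Metric.mem_closedBall, dist_zero_right] using hz
      have hmem1 : x + z ∈ Metric.closedBall x 1 := by
        simp only [Metric.mem_closedBall, dist_eq_norm]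
        simpa using le_trans hz1 hy
      have hmem2 : x - z ∈ Metric.closedBall x 1 := by
        simp only [Metric.mem_closedBall, dist_eq_norm]
        calc ‖x - z - x‖ = ‖z‖ := by rw [show x - z - x = -z by abel, norm_neg]
          _ ≤ 1 := le_trans hz1 hy
      calc ‖ψ (x + z) - ψ (x - z)‖ ≤ L * ‖(x + z) - (x - z)‖ := hψlip _ hmem1 _ hmem2
        _ = L * ‖z + z‖ := by congr 1; abel_nf
        _ ≤ L * (‖z‖ + ‖z‖) := mul_le_mul_of_nonneg_left (norm_add_le _ _) hL0
        _ ≤ 2 * L * ‖y‖ := by nlinarith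

lemma aux_tendsto_setIntegral {h : E2 → ℝ} (hh : Integrable h volume) :
    Tendsto (fun ε : ℝ => ∫ y in {y : E2 | ε ≤ ‖y‖}, h y) (𝓝[>] (0:ℝ))
      (𝓝 (∫ y : E2, h y)) := by
  have hmeas : ∀ ε : ℝ, MeasurableSet {y : E2 | ε ≤ ‖y‖} :=
    fun ε => (isClosed_le continuous_const continuous_norm).measurableSet
  have key := tendsto_integral_filter_of_dominated_convergence (μ := (volume : Measure E2))
    (l := 𝓝[>] (0:ℝ)) (F := fun ε : ℝ => ({y : E2 | ε ≤ ‖y‖}).indicator h) (f := h)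
    (bound := fun y => ‖h y‖)
    (Eventually.of_forall fun ε => hh.aestronglyMeasurable.indicator (hmeas ε))
    (Eventually.of_forall fun ε => ae_of_all _ fun y => norm_indicator_le_norm_self h y)
    hh.norm ?_
  · refine key.congr fun ε => ?_
    exact integral_indicator (hmeas ε)
  · have h0 : ∀ᵐ y : E2, y ≠ 0 := by
      rw [ae_iff]
      have : {y : E2 | ¬ y ≠ 0} = {0} := by ext y; simp
      rw [this]
      exact measure_singleton 0
    filter_upwards [h0] with y hy
    have hpos : 0 < ‖y‖ := norm_pos_iff.mpr hy
    refine Tendsto.congr' ?_ tendsto_const_nhds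
    filter_upwards [Ioo_mem_nhdsGT_of_mem ⟨le_refl (0:ℝ), hpos⟩] with ε hε
    exact (Set.indicator_of_mem (show y ∈ {y : E2 | ε ≤ ‖y‖} from le_of_lt hε.2) h).symm


/-- **pointwise identity for the fractional Laplacian.**
For `α ∈ (0,2)` and a smooth `2πℤ²`-periodic `φ : ℝ² → ℝ`, at every `x` the principal values
`L₁ = p.v. ∫ (φ(x) − φ(x+y)) c_α |y|^{−(2+α)} dy` and
`L₂ = p.v. ∫ (φ(x)² − φ(x+y)²) c_α |y|^{−(2+α)} dy` exist, the integral
`D_α[φ](x) = ∫ (φ(x) − φ(x+y))² c_α |y|^{−(2+α)} dy` is finite, and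
`2 φ(x) L₁ = L₂ + D_α[φ](x)`. -/
theorem fracLap_pointwise_identity (α : ℝ) (hα : α ∈ Set.Ioo (0 : ℝ) 2)
    (φ : EuclideanSpace ℝ (Fin 2) → ℝ) (hφ : ContDiff ℝ (⊤ : ℕ∞) φ)
    (hper : ∀ (x : EuclideanSpace ℝ (Fin 2)) (k : Fin 2 → ℤ),
      φ (x + (EuclideanSpace.equiv (Fin 2) ℝ).symm (fun i => 2 * π * (k i : ℝ))) = φ x)
    (x : EuclideanSpace ℝ (Fin 2)) :
    ∃ L₁ L₂ : ℝ,
      Tendsto (fun ε : ℝ => ∫ y in {y : EuclideanSpace ℝ (Fin 2) | ε ≤ ‖y‖},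
          (φ x - φ (x + y)) * (fracLapConst α * ‖y‖ ^ (-(2 + α)))) (𝓝[>] 0) (𝓝 L₁) ∧
      Tendsto (fun ε : ℝ => ∫ y in {y : EuclideanSpace ℝ (Fin 2) | ε ≤ ‖y‖},
          ((φ x) ^ 2 - (φ (x + y)) ^ 2) * (fracLapConst α * ‖y‖ ^ (-(2 + α)))) (𝓝[>] 0) (𝓝 L₂) ∧
      Integrable (fun y : EuclideanSpace ℝ (Fin 2) =>
          (φ x - φ (x + y)) ^ 2 * (fracLapConst α * ‖y‖ ^ (-(2 + α)))) ∧
      2 * φ x * L₁ = L₂ + ∫ y : EuclideanSpace ℝ (Fin 2),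
          (φ x - φ (x + y)) ^ 2 * (fracLapConst α * ‖y‖ ^ (-(2 + α))) := by
  obtain ⟨h0, h2⟩ := hα
  obtain ⟨M, hM0, hM⟩ := aux_bounded hφ.continuous hper
  obtain ⟨C₁, C₂, hC₁0, hC₂0, htay1, htay2⟩ := aux_taylor hφ x
  set c := fracLapConst α with hc
  have hKm : Measurable fun y : E2 => c * ‖y‖ ^ (-(2 + α)) := by fun_prop
  have hKabs : ∀ y : E2, |c * ‖y‖ ^ (-(2 + α))| = |c| * ‖y‖ ^ (-(2 + α)) := fun y => by
    rw [abs_mul, abs_of_nonneg (rpow_nonneg (norm_nonneg y) _)]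
  have hKnn : ∀ y : E2, (0:ℝ) ≤ |c| * ‖y‖ ^ (-(2 + α)) := fun y => by positivity
  have hmerge : ∀ t : ℝ, 0 ≤ t → t ^ 2 * t ^ (-(2 + α)) = t ^ (-α) := by
    intro t ht
    have hcast : t ^ (2:ℕ) = t ^ ((2:ℕ):ℝ) := (Real.rpow_natCast t 2).symm
    rw [hcast, ← Real.rpow_add' ht (by push_cast; intro hcontra; linarith [hcontra])]
    congr 1
    push_cast
    ring
  have hcont1 : Continuous fun y : E2 => φ x - φ (x + y) :=
    continuous_const.sub (hφ.continuous.comp (continuous_const.add continuous_id))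
  have hcont2 : Continuous fun y : E2 => φ x - φ (x - y) :=
    continuous_const.sub (hφ.continuous.comp (continuous_const.sub continuous_id))
  have hm_f1 : AEStronglyMeasurable
      (fun y : E2 => (φ x - φ (x + y)) * (c * ‖y‖ ^ (-(2 + α)))) volume :=
    (hcont1.measurable.mul hKm).aestronglyMeasurable
  have hm_fneg : AEStronglyMeasurable
      (fun y : E2 => (φ x - φ (x - y)) * (c * ‖y‖ ^ (-(2 + α)))) volume :=
    (hcont2.measurable.mul hKm).aestronglyMeasurable
  have hm_g : AEStronglyMeasurable
      (fun y : E2 => (2 * φ x - φ (x + y) - φ (x - y)) * (c * ‖y‖ ^ (-(2 + α)))) volume := by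
    have : Continuous fun y : E2 => 2 * φ x - φ (x + y) - φ (x - y) := by
      refine Continuous.sub (Continuous.sub continuous_const ?_) ?_
      · exact hφ.continuous.comp (continuous_const.add continuous_id)
      · exact hφ.continuous.comp (continuous_const.sub continuous_id)
    exact (this.measurable.mul hKm).aestronglyMeasurable
  have hm_sq : AEStronglyMeasurable
      (fun y : E2 => (φ x - φ (x + y)) ^ 2 * (c * ‖y‖ ^ (-(2 + α)))) volume :=
    (((hcont1.pow 2).measurable).mul hKm).aestronglyMeasurable
  have habs2M : ∀ y : E2, |φ x - φ (x + y)| ≤ 2 * M := fun y => by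
    have a := abs_le.mp (hM x); have b := abs_le.mp (hM (x + y))
    exact abs_le.mpr ⟨by linarith, by linarith⟩
  -- integrability of the symmetrized function
  have hg_int : Integrable
      (fun y : E2 => (2 * φ x - φ (x + y) - φ (x - y)) * (c * ‖y‖ ^ (-(2 + α)))) volume := by
    refine aux_integrable_of_bounds h0 h2 hm_g (C := C₂ * |c|) (M := 4 * M * |c|) ?_ ?_
    · intro y hy
      calc |(2 * φ x - φ (x + y) - φ (x - y)) * (c * ‖y‖ ^ (-(2 + α)))|
          = |2 * φ x - φ (x + y) - φ (x - y)| * |c * ‖y‖ ^ (-(2 + α))| := abs_mul _ _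
        _ ≤ (C₂ * ‖y‖ ^ 2) * (|c| * ‖y‖ ^ (-(2 + α))) := by
            rw [hKabs y]
            exact mul_le_mul_of_nonneg_right (htay2 y hy.le) (hKnn y)
        _ = (C₂ * |c|) * (‖y‖ ^ 2 * ‖y‖ ^ (-(2 + α))) := by ring
        _ = (C₂ * |c|) * ‖y‖ ^ (-α) := by rw [hmerge ‖y‖ (norm_nonneg y)]
    · intro y _
      have hb : |2 * φ x - φ (x + y) - φ (x - y)| ≤ 4 * M := by
        have a := abs_le.mp (hM x); have b := abs_le.mp (hM (x + y))
        have d := abs_le.mp (hM (x - y))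
        exact abs_le.mpr ⟨by linarith, by linarith⟩
      calc |(2 * φ x - φ (x + y) - φ (x - y)) * (c * ‖y‖ ^ (-(2 + α)))|
          = |2 * φ x - φ (x + y) - φ (x - y)| * |c * ‖y‖ ^ (-(2 + α))| := abs_mul _ _
        _ ≤ (4 * M) * (|c| * ‖y‖ ^ (-(2 + α))) := by
            rw [hKabs y]
            exact mul_le_mul_of_nonneg_right hb (hKnn y)
        _ = (4 * M * |c|) * ‖y‖ ^ (-(2 + α)) := by ring
  -- integrability of the square term
  have hsq_int : Integrable
      (fun y : E2 => (φ x - φ (x + y)) ^ 2 * (c * ‖y‖ ^ (-(2 + α)))) volume := by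
    refine aux_integrable_of_bounds h0 h2 hm_sq (C := C₁ ^ 2 * |c|) (M := 4 * M ^ 2 * |c|) ?_ ?_
    · intro y hy
      have hbsq : (φ x - φ (x + y)) ^ 2 ≤ C₁ ^ 2 * ‖y‖ ^ 2 := by
        have := htay1 y hy.le
        nlinarith [abs_nonneg (φ x - φ (x + y)), sq_abs (φ x - φ (x + y)), norm_nonneg y]
      calc |(φ x - φ (x + y)) ^ 2 * (c * ‖y‖ ^ (-(2 + α)))|
          = (φ x - φ (x + y)) ^ 2 * |c * ‖y‖ ^ (-(2 + α))| := by
            rw [abs_mul, abs_of_nonneg (sq_nonneg _)]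
        _ ≤ (C₁ ^ 2 * ‖y‖ ^ 2) * (|c| * ‖y‖ ^ (-(2 + α))) := by
            rw [hKabs y]
            exact mul_le_mul_of_nonneg_right hbsq (hKnn y)
        _ = (C₁ ^ 2 * |c|) * (‖y‖ ^ 2 * ‖y‖ ^ (-(2 + α))) := by ring
        _ = (C₁ ^ 2 * |c|) * ‖y‖ ^ (-α) := by rw [hmerge ‖y‖ (norm_nonneg y)]
    · intro y _
      have hbsq : (φ x - φ (x + y)) ^ 2 ≤ 4 * M ^ 2 := by
        have := habs2M y
        nlinarith [abs_nonneg (φ x - φ (x + y)), sq_abs (φ x - φ (x + y))]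
      calc |(φ x - φ (x + y)) ^ 2 * (c * ‖y‖ ^ (-(2 + α)))|
          = (φ x - φ (x + y)) ^ 2 * |c * ‖y‖ ^ (-(2 + α))| := by
            rw [abs_mul, abs_of_nonneg (sq_nonneg _)]
        _ ≤ (4 * M ^ 2) * (|c| * ‖y‖ ^ (-(2 + α))) := by
            rw [hKabs y]
            exact mul_le_mul_of_nonneg_right hbsq (hKnn y)
        _ = (4 * M ^ 2 * |c|) * ‖y‖ ^ (-(2 + α)) := by ring
  have hS : ∀ ε : ℝ, MeasurableSet {y : E2 | ε ≤ ‖y‖} :=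
    fun ε => (isClosed_le continuous_const continuous_norm).measurableSet
  have hIf1 : ∀ ε : ℝ, 0 < ε → IntegrableOn
      (fun y : E2 => (φ x - φ (x + y)) * (c * ‖y‖ ^ (-(2 + α)))) {y : E2 | ε ≤ ‖y‖} volume := by
    intro ε hε
    refine aux_intOn_of_bounded h0 hε hm_f1 (B := 2 * M * |c|) fun y => ?_
    calc |(φ x - φ (x + y)) * (c * ‖y‖ ^ (-(2 + α)))|
        = |φ x - φ (x + y)| * |c * ‖y‖ ^ (-(2 + α))| := abs_mul _ _
      _ ≤ (2 * M) * (|c| * ‖y‖ ^ (-(2 + α))) := by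
          rw [hKabs y]
          exact mul_le_mul_of_nonneg_right (habs2M y) (hKnn y)
      _ = (2 * M * |c|) * ‖y‖ ^ (-(2 + α)) := by ring
  have hIfneg : ∀ ε : ℝ, 0 < ε → IntegrableOn
      (fun y : E2 => (φ x - φ (x - y)) * (c * ‖y‖ ^ (-(2 + α)))) {y : E2 | ε ≤ ‖y‖} volume := by
    intro ε hε
    refine aux_intOn_of_bounded h0 hε hm_fneg (B := 2 * M * |c|) fun y => ?_
    have hb : |φ x - φ (x - y)| ≤ 2 * M := by
      have a := abs_le.mp (hM x); have b := abs_le.mp (hM (x - y))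
      exact abs_le.mpr ⟨by linarith, by linarith⟩
    calc |(φ x - φ (x - y)) * (c * ‖y‖ ^ (-(2 + α)))|
        = |φ x - φ (x - y)| * |c * ‖y‖ ^ (-(2 + α))| := abs_mul _ _
      _ ≤ (2 * M) * (|c| * ‖y‖ ^ (-(2 + α))) := by
          rw [hKabs y]
          exact mul_le_mul_of_nonneg_right hb (hKnn y)
      _ = (2 * M * |c|) * ‖y‖ ^ (-(2 + α)) := by ring
  -- reflection identity
  have hflip : ∀ ε : ℝ,
      (∫ y in {y : E2 | ε ≤ ‖y‖}, (φ x - φ (x - y)) * (c * ‖y‖ ^ (-(2 + α))))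
      = ∫ y in {y : E2 | ε ≤ ‖y‖}, (φ x - φ (x + y)) * (c * ‖y‖ ^ (-(2 + α))) := by
    intro ε
    rw [← integral_indicator (hS ε), ← integral_indicator (hS ε),
      ← integral_neg_eq_self (fun y : E2 => ({y : E2 | ε ≤ ‖y‖}).indicator
        (fun y => (φ x - φ (x + y)) * (c * ‖y‖ ^ (-(2 + α)))) y) volume]
    congr 1
    funext y
    by_cases hy : ε ≤ ‖y‖
    · have hy' : -y ∈ {y : E2 | ε ≤ ‖y‖} := by
        simp only [Set.mem_setOf_eq, norm_neg]; exact hy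
      rw [Set.indicator_of_mem (show y ∈ {y : E2 | ε ≤ ‖y‖} from hy) _,
        Set.indicator_of_mem hy' _]
      rw [norm_neg, ← sub_eq_add_neg]
    · have hy' : -y ∉ {y : E2 | ε ≤ ‖y‖} := by
        simp only [Set.mem_setOf_eq, norm_neg]; exact hy
      rw [Set.indicator_of_notMem (show y ∉ {y : E2 | ε ≤ ‖y‖} from hy) _,
        Set.indicator_of_notMem hy' _]
  -- halving identity
  have hhalf : ∀ ε : ℝ, 0 < ε →
      (∫ y in {y : E2 | ε ≤ ‖y‖}, (2 * φ x - φ (x + y) - φ (x - y)) * (c * ‖y‖ ^ (-(2 + α))))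
      = 2 * ∫ y in {y : E2 | ε ≤ ‖y‖}, (φ x - φ (x + y)) * (c * ‖y‖ ^ (-(2 + α))) := by
    intro ε hε
    have hsplit : (fun y : E2 => (2 * φ x - φ (x + y) - φ (x - y)) * (c * ‖y‖ ^ (-(2 + α))))
        = fun y : E2 => (φ x - φ (x + y)) * (c * ‖y‖ ^ (-(2 + α)))
          + (φ x - φ (x - y)) * (c * ‖y‖ ^ (-(2 + α))) := funext fun y => by ring
    rw [hsplit, integral_add (hIf1 ε hε) (hIfneg ε hε), hflip ε]
    ring
  -- limits
  have hIg := aux_tendsto_setIntegral hg_int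
  have hIsq := aux_tendsto_setIntegral hsq_int
  set G : ℝ := ∫ y : E2, (2 * φ x - φ (x + y) - φ (x - y)) * (c * ‖y‖ ^ (-(2 + α))) with hG
  set D : ℝ := ∫ y : E2, (φ x - φ (x + y)) ^ 2 * (c * ‖y‖ ^ (-(2 + α))) with hD
  have hT1 : Tendsto (fun ε : ℝ => ∫ y in {y : E2 | ε ≤ ‖y‖},
      (φ x - φ (x + y)) * (c * ‖y‖ ^ (-(2 + α)))) (𝓝[>] (0:ℝ)) (𝓝 (G / 2)) := by
    refine Tendsto.congr' ?_ (hIg.div_const 2)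
    filter_upwards [self_mem_nhdsWithin] with ε hε
    rw [hhalf ε hε]
    ring
  have hT2 : Tendsto (fun ε : ℝ => ∫ y in {y : E2 | ε ≤ ‖y‖},
      ((φ x) ^ 2 - (φ (x + y)) ^ 2) * (c * ‖y‖ ^ (-(2 + α)))) (𝓝[>] (0:ℝ))
      (𝓝 (2 * φ x * (G / 2) - D)) := by
    refine Tendsto.congr' ?_ ((hT1.const_mul (2 * φ x)).sub hIsq)
    filter_upwards [self_mem_nhdsWithin] with ε hε
    have hsplit : (fun y : E2 => ((φ x) ^ 2 - (φ (x + y)) ^ 2) * (c * ‖y‖ ^ (-(2 + α))))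
        = fun y : E2 => (2 * φ x) * ((φ x - φ (x + y)) * (c * ‖y‖ ^ (-(2 + α))))
          - (φ x - φ (x + y)) ^ 2 * (c * ‖y‖ ^ (-(2 + α))) := funext fun y => by ring
    rw [hsplit, integral_sub ((hIf1 ε hε).const_mul (2 * φ x)) hsq_int.integrableOn,
      integral_const_mul (2 * φ x) _]
  exact ⟨G / 2, 2 * φ x * (G / 2) - D, hT1, hT2, hsq_int, by ring⟩

end
end

section
/- Let p ≥ 2 be an even integer. Then for all real numbers a and b, p (a^{p−1} − b^{p−1})(a − b) ≥ 2 (a^{p/2} − b^{p/2})². -/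
/-!
Write `p = 2(k + 1)`; the claim becomes `(aᵏ⁺¹ - bᵏ⁺¹)² ≤ (k + 1)(a²ᵏ⁺¹ - b²ᵏ⁺¹)(a - b)`.
For `a, b ≥ 0`, divide both sides by `(a - b)²`: by Cauchy–Schwarz the square of
`∑_{i ≤ k} aⁱ bᵏ⁻ⁱ` is at most `k + 1` times the sum of its squares `a²ⁱ b²ᵏ⁻²ⁱ`, which are
the even-indexed terms of the nonnegative sum `∑_{j ≤ 2k} aʲ b²ᵏ⁻ʲ`. If `a ≥ 0 ≥ b = -c`, the
inequality already holds without the factor `k + 1`, since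
`(a²ᵏ⁺¹ + c²ᵏ⁺¹)(a + c) - (aᵏ⁺¹ + cᵏ⁺¹)² = ac(aᵏ - cᵏ)²`. The remaining sign patterns follow
by the symmetries `(a, b) ↦ (b, a)` and `(a, b) ↦ (-a, -b)`.
-/

open Finset

lemma sq_geom_sum₂_le_of_nonneg {a b : ℝ} (ha : 0 ≤ a) (hb : 0 ≤ b) (k : ℕ) :
    (∑ i ∈ range (k + 1), a ^ i * b ^ (k - i)) ^ 2 ≤
      (k + 1) * ∑ j ∈ range (2 * k + 1), a ^ j * b ^ (2 * k - j) := by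
  have h_even_terms : ∑ i ∈ range (k + 1), (a ^ i * b ^ (k - i)) ^ 2 =
      ∑ j ∈ (range (k + 1)).image (2 * ·), a ^ j * b ^ (2 * k - j) := by
    rw [sum_image fun _ _ _ _ h => by omega]
    refine sum_congr rfl fun i _ => ?_
    rw [mul_pow, ← pow_mul, ← pow_mul, mul_comm i, show (k - i) * 2 = 2 * k - 2 * i by omega]
  calc (∑ i ∈ range (k + 1), a ^ i * b ^ (k - i)) ^ 2
      ≤ (k + 1) * ∑ i ∈ range (k + 1), (a ^ i * b ^ (k - i)) ^ 2 := by
        simpa using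
          sq_sum_le_card_mul_sum_sq (s := range (k + 1)) (f := fun i => a ^ i * b ^ (k - i))
    _ ≤ (k + 1) * ∑ j ∈ range (2 * k + 1), a ^ j * b ^ (2 * k - j) := by
        rw [h_even_terms]
        gcongr
        intro j hj
        simp only [mem_image, mem_range] at hj ⊢
        omega

lemma sq_pow_sub_pow_le_of_nonneg {a b : ℝ} (ha : 0 ≤ a) (hb : 0 ≤ b) (k : ℕ) :
    (a ^ (k + 1) - b ^ (k + 1)) ^ 2 ≤
      (k + 1) * ((a ^ (2 * k + 1) - b ^ (2 * k + 1)) * (a - b)) := by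
  rw [← geom_sum₂_mul a b (k + 1), ← geom_sum₂_mul a b (2 * k + 1)]
  simp only [add_tsub_cancel_right]
  calc _ = (∑ i ∈ range (k + 1), a ^ i * b ^ (k - i)) ^ 2 * (a - b) ^ 2 := by ring
    _ ≤ (k + 1) * (∑ j ∈ range (2 * k + 1), a ^ j * b ^ (2 * k - j)) * (a - b) ^ 2 := by
        gcongr
        exact sq_geom_sum₂_le_of_nonneg ha hb k
    _ = _ := by ring

lemma sq_pow_add_pow_le {x y : ℝ} (hx : 0 ≤ x) (hy : 0 ≤ y) (k : ℕ) :
    (x ^ (k + 1) + y ^ (k + 1)) ^ 2 ≤ (x ^ (2 * k + 1) + y ^ (2 * k + 1)) * (x + y) := by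
  have h_gap : (x ^ (2 * k + 1) + y ^ (2 * k + 1)) * (x + y) - (x ^ (k + 1) + y ^ (k + 1)) ^ 2 =
      x * y * (x ^ k - y ^ k) ^ 2 := by ring
  rw [← sub_nonneg, h_gap]
  positivity

lemma sq_pow_sub_pow_le_of_nonneg_of_nonpos {a b : ℝ} (ha : 0 ≤ a) (hb : b ≤ 0) (k : ℕ) :
    (a ^ (k + 1) - b ^ (k + 1)) ^ 2 ≤
      (k + 1) * ((a ^ (2 * k + 1) - b ^ (2 * k + 1)) * (a - b)) := by
  obtain ⟨c, hc, rfl⟩ : ∃ c, 0 ≤ c ∧ b = -c := ⟨-b, by linarith, by ring⟩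
  have h_prod_nonneg : 0 ≤ (a ^ (2 * k + 1) + c ^ (2 * k + 1)) * (a + c) := by positivity
  calc (a ^ (k + 1) - (-c) ^ (k + 1)) ^ 2
      = |a ^ (k + 1) - (-c) ^ (k + 1)| ^ 2 := (sq_abs _).symm
    _ ≤ (|a ^ (k + 1)| + |(-c) ^ (k + 1)|) ^ 2 := by gcongr; exact abs_sub _ _
    _ = (a ^ (k + 1) + c ^ (k + 1)) ^ 2 := by simp [abs_pow, abs_of_nonneg ha, abs_of_nonneg hc]
    _ ≤ (a ^ (2 * k + 1) + c ^ (2 * k + 1)) * (a + c) := sq_pow_add_pow_le ha hc k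
    _ ≤ (k + 1) * ((a ^ (2 * k + 1) + c ^ (2 * k + 1)) * (a + c)) :=
        le_mul_of_one_le_left h_prod_nonneg (by simp)
    _ = (k + 1) * ((a ^ (2 * k + 1) - (-c) ^ (2 * k + 1)) * (a - -c)) := by
        rw [Odd.neg_pow ⟨k, rfl⟩]; ring

lemma sq_neg_pow_sub_neg_pow {R : Type*} [CommRing R] (n : ℕ) (a b : R) :
    ((-a) ^ n - (-b) ^ n) ^ 2 = (a ^ n - b ^ n) ^ 2 := by
  rw [neg_pow a, neg_pow b, ← mul_sub, mul_pow, ← pow_mul, mul_comm n, pow_mul, neg_one_sq,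
    one_pow, one_mul]

lemma sq_pow_sub_pow_le (k : ℕ) (a b : ℝ) :
    (a ^ (k + 1) - b ^ (k + 1)) ^ 2 ≤
      (k + 1) * ((a ^ (2 * k + 1) - b ^ (2 * k + 1)) * (a - b)) := by
  rcases le_total 0 a with ha | ha <;> rcases le_total 0 b with hb | hb
  · exact sq_pow_sub_pow_le_of_nonneg ha hb k
  · exact sq_pow_sub_pow_le_of_nonneg_of_nonpos ha hb k
  · convert sq_pow_sub_pow_le_of_nonneg_of_nonpos hb ha k using 1 <;> ring
  · have h_neg := sq_pow_sub_pow_le_of_nonneg (neg_nonneg.2 ha) (neg_nonneg.2 hb) k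
    rw [sq_neg_pow_sub_neg_pow, Odd.neg_pow ⟨k, rfl⟩, Odd.neg_pow ⟨k, rfl⟩] at h_neg
    convert h_neg using 2; ring

theorem fp_nonneg_general (p : ℕ) (hpeven : Even p) (a b : ℝ) :
    (p : ℝ) * (a ^ (p - 1) - b ^ (p - 1)) * (a - b) ≥ 2 * (a ^ (p / 2) - b ^ (p / 2)) ^ 2 := by
  obtain ⟨m, rfl⟩ := hpeven
  rcases m with _ | k
  · simp
  · rw [show k + 1 + (k + 1) - 1 = 2 * k + 1 by omega, show (k + 1 + (k + 1)) / 2 = k + 1 by omega]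
    push_cast
    linarith [sq_pow_sub_pow_le k a b]

/-- For every even integer `p ≥ 2` and all real `a, b`,
`p (a^{p-1} - b^{p-1})(a - b) ≥ 2 (a^{p/2} - b^{p/2})²`. -/
theorem fp_nonneg (p : ℕ) (hp : 2 ≤ p) (hpeven : Even p) (a b : ℝ) :
    (p : ℝ) * (a ^ (p - 1) - b ^ (p - 1)) * (a - b) ≥ 2 * (a ^ (p / 2) - b ^ (p / 2)) ^ 2 :=
  fp_nonneg_general p hpeven a b
end

section
/- Let p ≥ 4 be an even integer. Then for all real numbers a and b, p (a^{p−1} − b^{p−1})(a − b) − 2 (a^{p/2} − b^{p/2})² ≥ ((p−2)/2) (a − b)² a^{p−2}. -/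
/-!
Write `p = 2n + 2`. The inequality follows from the symmetric, stronger one
`2(n+1)(a^{2n+1} - b^{2n+1})(a - b) - 2(a^{n+1} - b^{n+1})² ≥ n (a - b)² (a^{2n} + b^{2n})`,
whose defect `D n a b` (`fpDefect`) satisfies the polynomial identity
`D (n+2) = (ab)² D n + (a - b)² ((n+1)(a + b)² (a^{2n+2} + b^{2n+2}) + (a² - b²)(a^{2n+2} - b^{2n+2}))`.
Every term on the right is nonnegative once `D n` is, the last because `x ↦ x^{n+1}` is monotone on
`[0, ∞)`; with `D 0 = 0` and `D 1 = (a - b)²(a² + b²)` this gives `D n ≥ 0` by induction in steps of two.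
-/

section

variable {R : Type*} [CommRing R]

lemma sub_mul_pow_sub_pow_nonneg [LinearOrder R] [IsStrictOrderedRing R] {x y : R}
    (hx : 0 ≤ x) (hy : 0 ≤ y) (k : ℕ) :
    0 ≤ (x - y) * (x ^ k - y ^ k) := by
  rcases le_total x y with h | h
  · exact mul_nonneg_of_nonpos_of_nonpos (sub_nonpos.2 h) (sub_nonpos.2 (pow_le_pow_left₀ hx h k))
  · exact mul_nonneg (sub_nonneg.2 h) (sub_nonneg.2 (pow_le_pow_left₀ hy h k))

def fpDefect (n : ℕ) (a b : R) : R :=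
  2 * (n + 1) * (a ^ (2 * n + 1) - b ^ (2 * n + 1)) * (a - b) - 2 * (a ^ (n + 1) - b ^ (n + 1)) ^ 2
    - n * (a - b) ^ 2 * (a ^ (2 * n) + b ^ (2 * n))

lemma fpDefect_zero (a b : R) : fpDefect 0 a b = 0 := by
  simp only [fpDefect]
  ring

lemma fpDefect_one (a b : R) : fpDefect 1 a b = (a - b) ^ 2 * (a ^ 2 + b ^ 2) := by
  simp only [fpDefect]
  push_cast
  ring

lemma fpDefect_add_two (n : ℕ) (a b : R) :
    fpDefect (n + 2) a b = (a * b) ^ 2 * fpDefect n a b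
      + (a - b) ^ 2 * ((n + 1) * (a + b) ^ 2 * ((a ^ 2) ^ (n + 1) + (b ^ 2) ^ (n + 1))
        + (a ^ 2 - b ^ 2) * ((a ^ 2) ^ (n + 1) - (b ^ 2) ^ (n + 1))) := by
  simp only [fpDefect]
  push_cast
  ring

theorem fpDefect_nonneg [LinearOrder R] [IsStrictOrderedRing R] : ∀ (n : ℕ) (a b : R), 0 ≤ fpDefect n a b
  | 0, a, b => (fpDefect_zero a b).ge
  | 1, a, b => by
    rw [fpDefect_one]
    positivity
  | n + 2, a, b => by
    have hD := fpDefect_nonneg n a b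
    have hmono := sub_mul_pow_sub_pow_nonneg (sq_nonneg a) (sq_nonneg b) (n + 1)
    rw [fpDefect_add_two]
    positivity

end

/-- For every even integer `p ≥ 4` and all real `a, b`,
`p (a^{p-1} - b^{p-1})(a - b) - 2 (a^{p/2} - b^{p/2})² ≥ ((p-2)/2) (a-b)² a^{p-2}`. -/
theorem fp_lower_bound (p : ℕ) (hp : 4 ≤ p) (hpeven : Even p) (a b : ℝ) :
    (p : ℝ) * (a ^ (p - 1) - b ^ (p - 1)) * (a - b) - 2 * (a ^ (p / 2) - b ^ (p / 2)) ^ 2 ≥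
      (((p : ℝ) - 2) / 2) * (a - b) ^ 2 * a ^ (p - 2) := by
  obtain ⟨n, rfl⟩ : ∃ n, p = 2 * n + 2 := by
    obtain ⟨r, rfl⟩ := hpeven
    exact ⟨r - 1, by omega⟩
  rw [show 2 * n + 2 - 1 = 2 * n + 1 by omega, show (2 * n + 2) / 2 = n + 1 by omega,
    show 2 * n + 2 - 2 = 2 * n by omega]
  have hb : 0 ≤ (n : ℝ) * (a - b) ^ 2 * (b ^ n) ^ 2 := by positivity
  have hD := fpDefect_nonneg n a b
  unfold fpDefect at hD
  push_cast
  linear_combination hD + hb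
end

section
/- Let d ≥ 1, let p ≥ 4 be an even integer, and let θ : [−π,π]^d → ℝ be a continuous function with ∫_{[−π,π]^d} θ(x) dx = 0. Then ∫_{[−π,π]^d} ∫_{[−π,π]^d} (θ(x) − θ(y))² θ(x)^{p−2} dy dx ≥ (2π)^d ∫_{[−π,π]^d} θ(x)^p dx. -/
open Real MeasureTheory

/-!
For fixed `x`, expanding the square and using `∫ θ = 0` gives
`∫ (θ x - θ y)² θ x^(p-2) dy = |K| θ x^p + (∫ θ²) θ x^(p-2)`. Integrating in `x`, the
second term contributes `(∫ θ²)(∫ θ^(p-2))`, which is nonnegative because `p - 2` is even.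
-/

/-- The period cell `[−π,π]^d`. -/
def periodCell (d : ℕ) : Set (EuclideanSpace ℝ (Fin d)) :=
  {x | ∀ i, x i ∈ Set.Icc (-π) π}

section
variable {α : Type*} [MeasurableSpace α] {μ : Measure α} [IsFiniteMeasure μ] {θ : α → ℝ}

lemma integral_sub_sq_of_integral_eq_zero (h1 : Integrable θ μ)
    (h2 : Integrable (fun y => θ y ^ 2) μ) (hmean : ∫ y, θ y ∂μ = 0) (c : ℝ) :
    ∫ y, (c - θ y) ^ 2 ∂μ = μ.real Set.univ * c ^ 2 + ∫ y, θ y ^ 2 ∂μ := by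
  have hexpand : (fun y => (c - θ y) ^ 2) = fun y => c ^ 2 - 2 * c * θ y + θ y ^ 2 := by
    funext y; ring
  have hc : Integrable (fun _ => c ^ 2) μ := integrable_const _
  have hθc : Integrable (fun y => 2 * c * θ y) μ := h1.const_mul _
  have hlin : Integrable (fun y => c ^ 2 - 2 * c * θ y) μ := hc.sub hθc
  rw [hexpand, integral_add hlin h2, integral_sub hc hθc, integral_const,
    integral_const_mul, hmean, smul_eq_mul]
  ring

lemma integral_integral_sub_sq_mul_pow (hint : ∀ k : ℕ, Integrable (fun x => θ x ^ k) μ)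
    (hmean : ∫ y, θ y ∂μ = 0) (n : ℕ) :
    ∫ x, ∫ y, (θ x - θ y) ^ 2 * θ x ^ n ∂μ ∂μ =
      μ.real Set.univ * ∫ x, θ x ^ (n + 2) ∂μ + (∫ y, θ y ^ 2 ∂μ) * ∫ x, θ x ^ n ∂μ := by
  have h1 : Integrable θ μ := by simpa using hint 1
  have hinner (x : α) : ∫ y, (θ x - θ y) ^ 2 * θ x ^ n ∂μ =
      μ.real Set.univ * θ x ^ (n + 2) + (∫ y, θ y ^ 2 ∂μ) * θ x ^ n := by
    rw [integral_mul_const, integral_sub_sq_of_integral_eq_zero h1 (hint 2) hmean]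
    ring
  simp_rw [hinner]
  rw [integral_add ((hint _).const_mul _) ((hint _).const_mul _), integral_const_mul,
    integral_const_mul]

lemma measureReal_univ_mul_integral_pow_le (hint : ∀ k : ℕ, Integrable (fun x => θ x ^ k) μ)
    (hmean : ∫ y, θ y ∂μ = 0) {n : ℕ} (hn : Even n) :
    μ.real Set.univ * ∫ x, θ x ^ (n + 2) ∂μ ≤ ∫ x, ∫ y, (θ x - θ y) ^ 2 * θ x ^ n ∂μ ∂μ := by
  rw [integral_integral_sub_sq_mul_pow hint hmean]
  have h2 : 0 ≤ ∫ y, θ y ^ 2 ∂μ := integral_nonneg fun y => sq_nonneg _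
  have hpow : 0 ≤ ∫ x, θ x ^ n ∂μ := integral_nonneg fun x => hn.pow_nonneg _
  nlinarith [mul_nonneg h2 hpow]

end

lemma isCompact_periodCell (d : ℕ) : IsCompact (periodCell d) := by
  have h : periodCell d = (EuclideanSpace.equiv (Fin d) ℝ).toHomeomorph ⁻¹'
      (Set.univ.pi fun _ : Fin d => Set.Icc (-π) π) := by
    ext x; simp [periodCell, Pi.le_def, forall_and]
  rw [h, Homeomorph.isCompact_preimage]
  exact isCompact_univ_pi fun _ => isCompact_Icc

lemma measureReal_periodCell (d : ℕ) : volume.real (periodCell d) = (2 * π) ^ d := by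
  have h : periodCell d = (MeasurableEquiv.toLp 2 (Fin d → ℝ)).symm ⁻¹'
      (Set.univ.pi fun _ : Fin d => Set.Icc (-π) π) := by
    ext x
    simp [periodCell, Pi.le_def, forall_and, MeasurableEquiv.coe_toLp_symm]
  rw [Measure.real, h,
    (EuclideanSpace.volume_preserving_symm_measurableEquiv_toLp (Fin d)).measure_preimage
      (MeasurableSet.univ_pi fun _ => measurableSet_Icc).nullMeasurableSet, volume_pi_pi]
  simp only [Real.volume_Icc, sub_neg_eq_add, Finset.prod_const, Finset.card_univ,
    Fintype.card_fin, ENNReal.toReal_pow]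
  rw [ENNReal.toReal_ofReal (by positivity)]
  ring

theorem zero_mean_double_integral_lower_bound_general (d : ℕ)
    (p : ℕ) (hp : 4 ≤ p) (hpeven : Even p)
    (θ : EuclideanSpace ℝ (Fin d) → ℝ) (hθ : ContinuousOn θ (periodCell d))
    (hmean : (∫ x in periodCell d, θ x) = 0) :
    (∫ x in periodCell d, (∫ y in periodCell d, (θ x - θ y) ^ 2 * θ x ^ (p - 2))) ≥
      (2 * π) ^ d * (∫ x in periodCell d, θ x ^ p) := by
  obtain ⟨n, rfl⟩ : ∃ n, p = n + 2 := ⟨p - 2, by omega⟩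
  have hn : Even n := by simpa [parity_simps] using hpeven
  have hint (k : ℕ) : IntegrableOn (fun x => θ x ^ k) (periodCell d) :=
    (hθ.pow k).integrableOn_compact (isCompact_periodCell d)
  have : IsFiniteMeasure (volume.restrict (periodCell d)) :=
    isFiniteMeasure_restrict.mpr (isCompact_periodCell d).measure_lt_top.ne
  have key := measureReal_univ_mul_integral_pow_le hint hmean hn
  rw [measureReal_restrict_apply_univ, measureReal_periodCell] at key
  simpa only [Nat.add_sub_cancel] using key

/-- For `d ≥ 1`, an even integer `p ≥ 4`, and a continuous zero-mean
`θ : [−π,π]^d → ℝ`, one has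
`∬ (θ(x) − θ(y))² θ(x)^{p−2} dy dx ≥ (2π)^d ∫ θ(x)^p dx`. -/
theorem zero_mean_double_integral_lower_bound (d : ℕ) (hd : 1 ≤ d)
    (p : ℕ) (hp : 4 ≤ p) (hpeven : Even p)
    (θ : EuclideanSpace ℝ (Fin d) → ℝ) (hθ : ContinuousOn θ (periodCell d))
    (hmean : (∫ x in periodCell d, θ x) = 0) :
    (∫ x in periodCell d, (∫ y in periodCell d, (θ x - θ y) ^ 2 * θ x ^ (p - 2))) ≥
      (2 * π) ^ d * (∫ x in periodCell d, θ x ^ p) :=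
  zero_mean_double_integral_lower_bound_general d p hp hpeven θ hθ hmean
end

section
/- There exists a universal constant C > 0 with the following property. Let θ : ℝ² → ℝ be bounded and Lipschitz continuous, let x ∈ ℝ², and let h ∈ ℝ² with h ≠ 0. Writing δ_hθ(z) = θ(z+h) − θ(z) and D[δ_hθ](x) = (1/(2π)) ∫_{ℝ²} (δ_hθ(x) − δ_hθ(x+y))² |y|^{−3} dy (a finite integral under these hypotheses), one has C · ‖θ‖_{L^∞(ℝ²)} · |h| · D[δ_hθ](x) ≥ |δ_hθ(x)|³. -/
/-!
Write `δ = Δ_[h] θ x` and `g y = Δ_[h] θ (x + y)`, and let `A = {r ≤ |y| < 2r}`. On `A` the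
integrand `(δ - g)² / |y|³` is at least `(δ² - 2 δ g) / (8 r³)`. The integral of `g` over `A` is
the difference of the integrals of `θ (x + ·)` over `A + h` and over `A`, so it is bounded by
`‖θ‖_∞ |A ∆ (A + h)| ≤ 12 π ‖θ‖_∞ r |h|`: the symmetric difference lies in two thin annuli of
width `2|h|`. Hence `8 r³ ∫ (δ - g)² / |y|³ ≥ 3π r² δ² - 24 π ‖θ‖_∞ r |h| |δ|`, and the choice
`r = 16 ‖θ‖_∞ |h| / |δ|` turns this into `|δ|³ ≲ ‖θ‖_∞ |h| ∫ (δ - g)² / |y|³`.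
-/

open Real MeasureTheory Metric Set fwdDiff Module
open scoped symmDiff

section Measure

variable {α : Type*} [MeasurableSpace α] {μ : Measure α}

lemma abs_setIntegral_sub_setIntegral_le {ψ : α → ℝ} {M : ℝ} (hψ : ∀ z, |ψ z| ≤ M)
    (hψm : AEStronglyMeasurable ψ μ) {s t : Set α} (hs : MeasurableSet s) (ht : MeasurableSet t)
    (hsμ : μ s ≠ ⊤) (htμ : μ t ≠ ⊤) :
    |∫ z in s, ψ z ∂μ - ∫ z in t, ψ z ∂μ| ≤ M * μ.real (s ∆ t) := by
  have hint : ∀ u, μ u ≠ ⊤ → IntegrableOn ψ u μ := fun u hu =>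
    Measure.integrableOn_of_bounded hu hψm (ae_of_all _ hψ)
  have hbound : ∀ u ⊆ s ∪ t, |∫ z in u, ψ z ∂μ| ≤ M * μ.real u := fun u hu =>
    norm_setIntegral_le_of_norm_le_const (f := ψ)
      ((measure_mono hu).trans_lt (measure_union_lt_top hsμ.lt_top htμ.lt_top)) fun z _ => hψ z
  rw [← integral_inter_add_sdiff ht (hint s hsμ), ← integral_inter_add_sdiff hs (hint t htμ),
    inter_comm t s, measureReal_symmDiff_eq hs ht hsμ htμ, add_sub_add_left_eq_sub, mul_add]
  exact (abs_sub _ _).trans (add_le_add (hbound _ (sdiff_subset.trans subset_union_left))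
    (hbound _ (sdiff_subset.trans subset_union_right)))

lemma sq_mul_measureReal_sub_le_pow_mul_integral {E : Type*} [SeminormedAddCommGroup E]
    [MeasurableSpace E] {μ : Measure E} {s : Set E} (hs : MeasurableSet s) (hsμ : μ s ≠ ⊤)
    {g : E → ℝ} (hg : IntegrableOn g s μ) (c : ℝ) {p : ℕ}
    (hint : Integrable (fun y => (c - g y) ^ 2 / ‖y‖ ^ p) μ) {R : ℝ}
    (hR : ∀ y ∈ s, 0 < ‖y‖ ∧ ‖y‖ ≤ R) (hR0 : 0 ≤ R) :
    c ^ 2 * μ.real s - 2 * c * ∫ y in s, g y ∂μ ≤ R ^ p * ∫ y, (c - g y) ^ 2 / ‖y‖ ^ p ∂μ := by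
  have hpoint : ∀ y ∈ s, c ^ 2 - 2 * c * g y ≤ R ^ p * ((c - g y) ^ 2 / ‖y‖ ^ p) := by
    intro y hy
    obtain ⟨hy0, hyR⟩ := hR y hy
    rw [mul_div_assoc', le_div_iff₀ (by positivity)]
    calc (c ^ 2 - 2 * c * g y) * ‖y‖ ^ p ≤ (c - g y) ^ 2 * ‖y‖ ^ p := by
          gcongr; nlinarith [sq_nonneg (g y)]
      _ ≤ R ^ p * (c - g y) ^ 2 := by rw [mul_comm]; gcongr
  have hconst : IntegrableOn (fun _ => c ^ 2) s μ := integrableOn_const hsμ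
  calc c ^ 2 * μ.real s - 2 * c * ∫ y in s, g y ∂μ = ∫ y in s, (c ^ 2 - 2 * c * g y) ∂μ := by
        rw [integral_sub hconst (hg.const_mul _), setIntegral_const, integral_const_mul,
          smul_eq_mul, mul_comm]
    _ ≤ ∫ y in s, R ^ p * ((c - g y) ^ 2 / ‖y‖ ^ p) ∂μ :=
        setIntegral_mono_on (hconst.sub (hg.const_mul _))
          (hint.const_mul _).integrableOn hs hpoint
    _ ≤ R ^ p * ∫ y, (c - g y) ^ 2 / ‖y‖ ^ p ∂μ := by
        rw [integral_const_mul]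
        exact mul_le_mul_of_nonneg_left
          (setIntegral_le_integral hint (ae_of_all _ fun y => by positivity)) (by positivity)

lemma setIntegral_ball_comp_add_left {G : Type*} [NormedAddCommGroup G] [MeasurableSpace G]
    [MeasurableAdd G] (μ : Measure G) [μ.IsAddLeftInvariant] (θ : G → ℝ) (c : G) (R : ℝ) :
    ∫ y in ball 0 R, θ (c + y) ∂μ = ∫ z in ball c R, θ z ∂μ := by
  have := (measurePreserving_add_left μ c).setIntegral_preimage_emb
    (measurableEmbedding_addLeft c) θ (ball c R)
  rwa [preimage_add_left_ball, neg_add_cancel] at this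

end Measure

lemma LipschitzWith.fwdDiff {G : Type*} [SeminormedAddCommGroup G] {θ : G → ℝ} {K : NNReal}
    (hθ : LipschitzWith K θ) (h : G) : LipschitzWith (2 * K) (Δ_[h] θ) := by
  rw [two_mul]
  exact (hθ.comp (isometry_add_right h).lipschitz).sub hθ |>.weaken (by simp)

lemma abs_fwdDiff_le {G : Type*} [AddCommMonoid G] {θ : G → ℝ} {M : ℝ} (hθ : ∀ z, |θ z| ≤ M)
    (h z : G) : |Δ_[h] θ z| ≤ 2 * M :=
  (abs_sub _ _).trans (by linarith [hθ (z + h), hθ z])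

lemma integrableOn_fwdDiff_comp_add_left {G : Type*} [AddCommGroup G] [MeasurableSpace G]
    [MeasurableAdd G] {μ : Measure G} {θ : G → ℝ} {M : ℝ} (hθ : ∀ z, |θ z| ≤ M)
    (hθm : Measurable θ) (x h : G) {s : Set G} (hs : μ s ≠ ⊤) :
    IntegrableOn (fun y => Δ_[h] θ (x + y)) s μ :=
  Measure.integrableOn_of_bounded hs
    (by unfold fwdDiff; fun_prop : Measurable fun y => Δ_[h] θ (x + y)).aestronglyMeasurable
    (ae_of_all _ fun y => abs_fwdDiff_le hθ h _)

lemma ball_add_symmDiff_ball_subset {E : Type*} [SeminormedAddCommGroup E] (x h : E) (R : ℝ) :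
    ball (x + h) R ∆ ball x R ⊆ ball x (R + ‖h‖) \ ball x (R - ‖h‖) := by
  rintro y (⟨hy₁, hy₂⟩ | ⟨hy₁, hy₂⟩) <;>
    simp only [mem_ball, dist_eq_norm, not_lt, mem_sdiff] at hy₁ hy₂ ⊢
  · constructor
    · calc ‖y - x‖ ≤ ‖y - (x + h)‖ + ‖x + h - x‖ := norm_sub_le_norm_sub_add_norm_sub _ _ _
        _ < R + ‖h‖ := by rw [add_sub_cancel_left]; linarith
    · linarith [norm_nonneg h]
  · constructor
    · linarith [norm_nonneg h]
    · have := norm_sub_le_norm_sub_add_norm_sub y x (x + h)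
      rw [sub_add_cancel_left, norm_neg] at this
      linarith

section HaarMeasure

variable {E : Type*} [NormedAddCommGroup E] [NormedSpace ℝ E] [FiniteDimensional ℝ E]
  [MeasurableSpace E] [BorelSpace E] (μ : Measure E) [μ.IsAddHaarMeasure]

lemma measureReal_ball_sdiff_ball [Nontrivial E] (x : E) {r R : ℝ} (hr : 0 ≤ r) (hrR : r ≤ R) :
    μ.real (ball x R \ ball x r) = (R ^ finrank ℝ E - r ^ finrank ℝ E) * μ.real (ball 0 1) := by
  have hball : ∀ ρ, 0 ≤ ρ → μ.real (ball x ρ) = ρ ^ finrank ℝ E * μ.real (ball 0 1) :=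
    fun ρ hρ => by
      rw [← Measure.addHaar_real_closedBall_eq_addHaar_real_ball,
        Measure.addHaar_real_closedBall μ x hρ]
  rw [measureReal_sdiff (ball_subset_ball hrR) measurableSet_ball measure_ball_lt_top.ne,
    hball R (hr.trans hrR), hball r hr, sub_mul]

lemma abs_setIntegral_ball_fwdDiff_le [Nontrivial E] {θ : E → ℝ} {M : ℝ} (hθ : ∀ z, |θ z| ≤ M)
    (hθm : Measurable θ) (x h : E) {R : ℝ} (hR : ‖h‖ ≤ R) :
    |∫ y in ball 0 R, Δ_[h] θ (x + y) ∂μ| ≤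
      M * (((R + ‖h‖) ^ finrank ℝ E - (R - ‖h‖) ^ finrank ℝ E) * μ.real (ball 0 1)) := by
  have hint : ∀ c : E, IntegrableOn (fun y => θ (c + y)) (ball 0 R) μ := fun c =>
    Measure.integrableOn_of_bounded measure_ball_lt_top.ne
      (hθm.comp (measurable_const_add c)).aestronglyMeasurable (ae_of_all _ fun y => hθ _)
  have hshift : ∫ y in ball 0 R, Δ_[h] θ (x + y) ∂μ =
      ∫ z in ball (x + h) R, θ z ∂μ - ∫ z in ball x R, θ z ∂μ := by
    simp only [fwdDiff, add_right_comm x _ h]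
    rw [integral_sub (hint (x + h)) (hint x), setIntegral_ball_comp_add_left,
      setIntegral_ball_comp_add_left]
  rw [hshift, ← measureReal_ball_sdiff_ball μ x (sub_nonneg.2 hR) (by linarith [norm_nonneg h])]
  refine (abs_setIntegral_sub_setIntegral_le hθ hθm.aestronglyMeasurable measurableSet_ball
    measurableSet_ball measure_ball_lt_top.ne measure_ball_lt_top.ne).trans ?_
  gcongr
  · exact (abs_nonneg _).trans (hθ 0)
  · exact (measure_mono sdiff_subset).trans_lt measure_ball_lt_top |>.ne
  · exact ball_add_symmDiff_ball_subset x h R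

lemma integrable_sq_sub_div_norm_pow_finrank_add_one (hd : 1 ≤ finrank ℝ E) {u : E → ℝ}
    {K : NNReal} (hu : LipschitzWith K u) {B : ℝ} (hB : ∀ z, |u z| ≤ B) (x : E) :
    Integrable (fun y => (u x - u (x + y)) ^ 2 / ‖y‖ ^ (finrank ℝ E + 1)) μ := by
  set d := finrank ℝ E
  have hlip : ∀ y, |u x - u (x + y)| ≤ K * ‖y‖ := fun y => by
    simpa [Real.dist_eq, dist_eq_norm] using hu.dist_le_mul x (x + y)
  have hbdd : ∀ y, |u x - u (x + y)| ≤ 2 * B := fun y =>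
    (abs_sub _ _).trans (by linarith [hB x, hB (x + y)])
  have hc := hu.continuous
  have hmeas : AEStronglyMeasurable (fun y => (u x - u (x + y)) ^ 2 / ‖y‖ ^ (d + 1)) μ :=
    ((by fun_prop : Continuous fun y => (u x - u (x + (y : E))) ^ 2).measurable.div
      (measurable_norm.pow_const _)).aestronglyMeasurable
  rw [← integrableOn_univ, ← union_compl_self (ball 0 1)]
  refine IntegrableOn.union ?_ ?_
  · refine integrableOn_ball_of_norm_le_rpow (C := K ^ 2) (α := d - 1) hd (by linarith) ?_ hmeas
    refine ae_of_all _ fun y => ?_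
    rcases eq_or_ne y 0 with rfl | hy
    · simp only [norm_zero, zero_pow (Nat.succ_ne_zero d), div_zero]
      positivity
    have hy : 0 < ‖y‖ := norm_pos_iff.2 hy
    have hexp : -((d : ℝ) - 1) = ((2 : ℕ) : ℝ) - ((d + 1 : ℕ) : ℝ) := by push_cast; ring
    rw [hexp, rpow_sub hy, rpow_natCast, rpow_natCast, Real.norm_eq_abs,
      abs_of_nonneg (by positivity), mul_div_assoc']
    gcongr
    rw [← sq_abs, ← mul_pow]
    exact pow_le_pow_left₀ (abs_nonneg _) (hlip y) 2
  · have hdecay := (integrable_one_add_norm (μ := μ) (r := d + 1) (by linarith)).const_mul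
      ((2 * B) ^ 2 * 2 ^ (d + 1))
    refine hdecay.integrableOn.mono' hmeas.restrict ?_
    rw [ae_restrict_iff' measurableSet_ball.compl]
    refine ae_of_all _ fun y hy => ?_
    have hy : 1 ≤ ‖y‖ := by simpa using hy
    have hexp : -((d : ℝ) + 1) = -(((d + 1 : ℕ) : ℝ)) := by push_cast; ring
    rw [hexp, rpow_neg (by positivity), rpow_natCast, Real.norm_eq_abs,
      abs_of_nonneg (by positivity)]
    calc (u x - u (x + y)) ^ 2 / ‖y‖ ^ (d + 1) ≤ (2 * B) ^ 2 / ‖y‖ ^ (d + 1) := by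
          have := pow_le_pow_left₀ (abs_nonneg _) (hbdd y) 2
          rw [sq_abs] at this
          gcongr
      _ = (2 * B) ^ 2 * 2 ^ (d + 1) / (2 * ‖y‖) ^ (d + 1) := by
          field_simp
          ring
      _ ≤ (2 * B) ^ 2 * 2 ^ (d + 1) * ((1 + ‖y‖) ^ (d + 1))⁻¹ := by
          rw [← div_eq_mul_inv]
          gcongr
          linarith

end HaarMeasure

local notation "ℝ²" => EuclideanSpace ℝ (Fin 2)

section Plane

variable {θ : ℝ² → ℝ} {M : ℝ}

lemma measureReal_unitBall_fin_two : volume.real (ball (0 : ℝ²) 1) = π := by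
  simp [Measure.real, pi_nonneg]

lemma abs_setIntegral_annulus_fwdDiff_le (hθ : ∀ z, |θ z| ≤ M) (hθm : Measurable θ) (x h : ℝ²)
    {r : ℝ} (hr : ‖h‖ ≤ r) :
    |∫ y in ball 0 (2 * r) \ ball 0 r, Δ_[h] θ (x + y)| ≤ 12 * π * M * r * ‖h‖ := by
  have hint := integrableOn_fwdDiff_comp_add_left (μ := volume) (s := ball 0 (2 * r)) hθ hθm x h
    measure_ball_lt_top.ne
  have hball := fun R hR => abs_setIntegral_ball_fwdDiff_le volume hθ hθm x h (R := R) hR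
  simp only [finrank_euclideanSpace_fin, measureReal_unitBall_fin_two] at hball
  rw [setIntegral_sdiff measurableSet_ball hint (ball_subset_ball (by linarith [norm_nonneg h]))]
  calc _ ≤ _ := abs_sub _ _
    _ ≤ M * (((2 * r + ‖h‖) ^ 2 - (2 * r - ‖h‖) ^ 2) * π) +
          M * (((r + ‖h‖) ^ 2 - (r - ‖h‖) ^ 2) * π) :=
        add_le_add (hball _ (by linarith [norm_nonneg h])) (hball r hr)
    _ = 12 * π * M * r * ‖h‖ := by ring

lemma sq_mul_sub_le_dissipation (hθ : ∀ z, |θ z| ≤ M) (hθm : Measurable θ) (x h : ℝ²)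
    (hint : Integrable fun y => (Δ_[h] θ x - Δ_[h] θ (x + y)) ^ 2 / ‖y‖ ^ 3) {r : ℝ} (hr : 0 < r)
    (hhr : ‖h‖ ≤ r) :
    3 * π * r ^ 2 * Δ_[h] θ x ^ 2 - 24 * π * M * r * ‖h‖ * |Δ_[h] θ x| ≤
      8 * r ^ 3 * ∫ y, (Δ_[h] θ x - Δ_[h] θ (x + y)) ^ 2 / ‖y‖ ^ 3 := by
  set A : Set ℝ² := ball 0 (2 * r) \ ball 0 r
  have hAμ : volume A ≠ ⊤ := ((measure_mono sdiff_subset).trans_lt measure_ball_lt_top).ne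
  have hAvol : volume.real A = 3 * π * r ^ 2 := by
    rw [measureReal_ball_sdiff_ball volume 0 hr.le (by linarith), finrank_euclideanSpace_fin,
      measureReal_unitBall_fin_two]
    ring
  have hA : ∀ y ∈ A, 0 < ‖y‖ ∧ ‖y‖ ≤ 2 * r := fun y ⟨hy₁, hy₂⟩ => by
    simp only [mem_ball, dist_zero_right, not_lt] at hy₁ hy₂
    exact ⟨hr.trans_le hy₂, hy₁.le⟩
  have key := sq_mul_measureReal_sub_le_pow_mul_integral
    (measurableSet_ball.diff measurableSet_ball) hAμ
    (integrableOn_fwdDiff_comp_add_left hθ hθm x h hAμ) (Δ_[h] θ x) hint hA (by positivity)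
  have hcross : 2 * Δ_[h] θ x * ∫ y in A, Δ_[h] θ (x + y) ≤
      2 * |Δ_[h] θ x| * (12 * π * M * r * ‖h‖) := by
    calc _ ≤ |2 * Δ_[h] θ x * ∫ y in A, Δ_[h] θ (x + y)| := le_abs_self _
      _ = 2 * |Δ_[h] θ x| * |∫ y in A, Δ_[h] θ (x + y)| := by simp [abs_mul]
      _ ≤ _ := by gcongr; exact abs_setIntegral_annulus_fwdDiff_le hθ hθm x h hhr
  rw [hAvol] at key
  linarith

lemma abs_fwdDiff_cube_le (hθ : ∀ z, |θ z| ≤ M) (hθm : Measurable θ) (x h : ℝ²)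
    (hint : Integrable fun y => (Δ_[h] θ x - Δ_[h] θ (x + y)) ^ 2 / ‖y‖ ^ 3) :
    |Δ_[h] θ x| ^ 3 ≤ 512 / 3 * M * ‖h‖ *
      ((1 / (2 * π)) * ∫ y, (Δ_[h] θ x - Δ_[h] θ (x + y)) ^ 2 / ‖y‖ ^ 3) := by
  set a := |Δ_[h] θ x|
  set I := ∫ y, (Δ_[h] θ x - Δ_[h] θ (x + y)) ^ 2 / ‖y‖ ^ 3
  have hI : 0 ≤ I := integral_nonneg fun y => by positivity
  have hM : 0 ≤ M := (abs_nonneg _).trans (hθ 0)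
  have ha0 : 0 ≤ a := abs_nonneg _
  rcases ha0.eq_or_lt with ha | ha
  · rw [← ha, zero_pow three_ne_zero]
    positivity
  have ht : 0 < ‖h‖ := norm_pos_iff.2 fun h0 => by simp [a, h0, fwdDiff] at ha
  have haM : a ≤ 2 * M := abs_fwdDiff_le hθ h x
  -- `r` maximises `(3π a² r - 24π a M ‖h‖) / (8 r²)`, the bound of `sq_mul_sub_le_dissipation`
  set r := 16 * M * ‖h‖ / a
  have hMpos : 0 < M := by linarith
  have hr : 0 < r := by positivity
  have hhr : ‖h‖ ≤ r := by rw [le_div_iff₀ ha]; nlinarith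
  have key := sq_mul_sub_le_dissipation hθ hθm x h hint hr hhr
  rw [← sq_abs (Δ_[h] θ x)] at key
  have hra : r * a = 16 * M * ‖h‖ := div_mul_cancel₀ _ ha.ne'
  have hlower : 384 * π * (M * ‖h‖) ^ 2 ≤ 8 * r ^ 3 * I := by
    linear_combination key - (3 * π * (r * a + 16 * M * ‖h‖) - 24 * π * M * ‖h‖) * hra
  have hcube : 384 * π * (M * ‖h‖) ^ 2 * a ^ 3 ≤ 32768 * (M * ‖h‖) ^ 3 * I := by
    have := mul_le_mul_of_nonneg_right hlower (pow_nonneg ha.le 3)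
    linear_combination
      this + 8 * I * ((r * a) ^ 2 + r * a * 16 * M * ‖h‖ + (16 * M * ‖h‖) ^ 2) * hra
  rw [show 512 / 3 * M * ‖h‖ * (1 / (2 * π) * I) =
    32768 * (M * ‖h‖) ^ 3 * I / (384 * π * (M * ‖h‖) ^ 2) by field_simp; ring]
  rw [le_div_iff₀ (by positivity)]
  linarith

end Plane

/-- **nonlinear lower bound for the half-Laplacian in 2D.**
There is a universal constant `C > 0` such that for every bounded Lipschitz `θ : ℝ² → ℝ`,
every `x` and every `h ≠ 0`, the dissipation integral
`D[δ_hθ](x) = (1/(2π)) ∫ (δ_hθ(x) − δ_hθ(x+y))² |y|^{−3} dy` is finite and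
`C ‖θ‖_{L^∞} |h| D[δ_hθ](x) ≥ |δ_hθ(x)|³`. -/
theorem nonlinear_lower_bound_2d :
    ∃ C : ℝ, 0 < C ∧
      ∀ θ : EuclideanSpace ℝ (Fin 2) → ℝ,
      (∃ M : ℝ, ∀ z, |θ z| ≤ M) → (∃ K : NNReal, LipschitzWith K θ) →
      ∀ x h : EuclideanSpace ℝ (Fin 2), h ≠ 0 →
        Integrable (fun y : EuclideanSpace ℝ (Fin 2) =>
          ((θ (x + h) - θ x) - (θ (x + y + h) - θ (x + y))) ^ 2 / ‖y‖ ^ 3) ∧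
        C * (⨆ z, |θ z|) * ‖h‖ *
            ((1 / (2 * π)) * ∫ y : EuclideanSpace ℝ (Fin 2),
              ((θ (x + h) - θ x) - (θ (x + y + h) - θ (x + y))) ^ 2 / ‖y‖ ^ 3) ≥
          |θ (x + h) - θ x| ^ 3 := by
  refine ⟨512 / 3, by norm_num, ?_⟩
  rintro θ ⟨M, hM⟩ ⟨K, hK⟩ x h -
  have hθ : ∀ z, |θ z| ≤ ⨆ z, |θ z| := le_ciSup ⟨M, by rintro _ ⟨z, rfl⟩; exact hM z⟩
  have hint := integrable_sq_sub_div_norm_pow_finrank_add_one volume (by simp) (hK.fwdDiff h)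
    (abs_fwdDiff_le hθ h) x
  rw [finrank_euclideanSpace_fin] at hint
  exact ⟨hint, abs_fwdDiff_cube_le hθ hK.continuous.measurable x h hint⟩
end

section
/- There exists a universal constant C > 0 with the following property. Let θ : ℝ → ℝ be bounded and Lipschitz continuous, let x ∈ ℝ, and let h ∈ ℝ with h ≠ 0. Writing δ_hθ(z) = θ(z+h) − θ(z) and D[δ_hθ](x) = ∫_{ℝ} (δ_hθ(x) − δ_hθ(x+y))² |y|^{−2} dy (a finite integral under these hypotheses), one has C · ‖θ‖_{L^∞(ℝ)} · |h| · D[δ_hθ](x) ≥ |δ_hθ(x)|³. -/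
open Real MeasureTheory

/-!
Write `a = δ_hθ(x)` and `S = ‖θ‖_∞`. Over any interval the integral of `δ_hθ` telescopes to
two integrals of `θ` over intervals of length `|h|`, so it is at most `2S|h|`. Hence on
`[r, 2r]` with `r = 4S|h|/|a|` the mean of `a - δ_hθ(x + y)` has size at least `2S|h|/r`.
By Cauchy–Schwarz and `y ≤ 2r` this forces `(2S|h|)² ≤ 4r³ D[δ_hθ](x)`, which rearranges
to `|a|³ ≤ 64 S|h| D[δ_hθ](x)`.
-/

theorem sq_setIntegral_le_measureReal_mul_setIntegral_sq {α : Type*} [MeasurableSpace α]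
    {μ : Measure α} {s : Set α} {g : α → ℝ} (hs : μ s ≠ ⊤) (hg : IntegrableOn g s μ)
    (hg2 : IntegrableOn (fun y => g y ^ 2) s μ) :
    (∫ y in s, g y ∂μ) ^ 2 ≤ μ.real s * ∫ y in s, g y ^ 2 ∂μ := by
  rcases eq_or_ne (μ s) 0 with h0 | h0
  · simp [setIntegral_measure_zero _ h0]
  have hpos : 0 < μ.real s := ENNReal.toReal_pos h0 hs
  have hJensen := (even_two.convexOn_pow (𝕜 := ℝ)).map_set_average_le (continuousOn_pow 2)
    isClosed_univ h0 hs (by simp) hg hg2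
  rw [setAverage_eq, setAverage_eq, smul_eq_mul, smul_eq_mul] at hJensen
  field_simp at hJensen
  linarith

theorem integrable_sq_div_sq_of_abs_le {g : ℝ → ℝ} (hg : AEStronglyMeasurable g) {A B : ℝ}
    (hA : ∀ y, |g y| ≤ A) (hB : ∀ y, |g y| ≤ B * |y|) :
    Integrable fun y => g y ^ 2 / |y| ^ 2 := by
  refine (integrable_inv_one_add_sq.const_mul (A ^ 2 + B ^ 2)).mono'
    ((hg.pow 2).div₀ (continuous_abs.pow 2).aestronglyMeasurable) (.of_forall fun y => ?_)
  rw [norm_of_nonneg (by positivity)]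
  rcases eq_or_ne y 0 with rfl | hy
  · rw [abs_zero, zero_pow two_ne_zero, div_zero]
    positivity
  have hA2 : g y ^ 2 ≤ A ^ 2 := by
    simpa only [sq_abs] using pow_le_pow_left₀ (abs_nonneg _) (hA y) 2
  have hB2 : g y ^ 2 ≤ B ^ 2 * y ^ 2 := by
    simpa only [sq_abs, mul_pow] using pow_le_pow_left₀ (abs_nonneg _) (hB y) 2
  rw [sq_abs, ← div_eq_mul_inv, div_le_div_iff₀ (by positivity) (by positivity)]
  nlinarith

theorem sq_intervalIntegral_le_integral_sq_div_sq {g : ℝ → ℝ} (hg : Continuous g) {r : ℝ}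
    (hr : 0 < r) (hint : Integrable fun y => g y ^ 2 / |y| ^ 2) :
    (∫ y in r..2 * r, g y) ^ 2 ≤ 4 * r ^ 3 * ∫ y, g y ^ 2 / |y| ^ 2 := by
  have hlen : volume.real (Set.Ioc r (2 * r)) = r := by
    rw [Real.volume_real_Ioc_of_le (by linarith)]; ring
  rw [intervalIntegral.integral_of_le (by linarith)]
  calc (∫ y in Set.Ioc r (2 * r), g y) ^ 2
      ≤ r * ∫ y in Set.Ioc r (2 * r), g y ^ 2 := by
        simpa only [hlen] using sq_setIntegral_le_measureReal_mul_setIntegral_sq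
          (μ := volume) (s := Set.Ioc r (2 * r)) measure_Ioc_lt_top.ne hg.integrableOn_Ioc
          (hg.pow 2).integrableOn_Ioc
    _ ≤ r * ∫ y in Set.Ioc r (2 * r), 4 * r ^ 2 * (g y ^ 2 / |y| ^ 2) := by
        refine mul_le_mul_of_nonneg_left (setIntegral_mono_on (hg.pow 2).integrableOn_Ioc
          (hint.integrableOn.const_mul _) measurableSet_Ioc fun y hy => ?_) hr.le
        have hy0 : 0 < y := hr.trans hy.1
        have hy2 : y ^ 2 ≤ (2 * r) ^ 2 := pow_le_pow_left₀ hy0.le hy.2 2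
        rw [sq_abs, mul_div_assoc', le_div_iff₀ (by positivity)]
        calc g y ^ 2 * y ^ 2 ≤ g y ^ 2 * (2 * r) ^ 2 :=
              mul_le_mul_of_nonneg_left hy2 (sq_nonneg _)
          _ = 4 * r ^ 2 * g y ^ 2 := by ring
    _ ≤ 4 * r ^ 3 * ∫ y, g y ^ 2 / |y| ^ 2 := by
        rw [integral_const_mul, ← mul_assoc, show r * (4 * r ^ 2) = 4 * r ^ 3 by ring]
        exact mul_le_mul_of_nonneg_left
          (setIntegral_le_integral hint (.of_forall fun y => by positivity)) (by positivity)

def finiteDiff (h : ℝ) (θ : ℝ → ℝ) (z : ℝ) : ℝ := θ (z + h) - θ z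

theorem Continuous.finiteDiff {θ : ℝ → ℝ} (hθ : Continuous θ) (h : ℝ) :
    Continuous (finiteDiff h θ) :=
  (hθ.comp (continuous_add_const h)).sub hθ

theorem abs_finiteDiff_le {θ : ℝ → ℝ} {M : ℝ} (hM : ∀ z, |θ z| ≤ M) (h x : ℝ) :
    |finiteDiff h θ x| ≤ 2 * M := by
  rw [two_mul]
  exact (abs_sub _ _).trans (add_le_add (hM _) (hM _))

theorem abs_finiteDiff_sub_finiteDiff_le {θ : ℝ → ℝ} {M : ℝ} (hM : ∀ z, |θ z| ≤ M)
    (h x x' : ℝ) : |finiteDiff h θ x - finiteDiff h θ x'| ≤ 4 * M := by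
  have := add_le_add (abs_finiteDiff_le hM h x) (abs_finiteDiff_le hM h x')
  linarith [abs_sub (finiteDiff h θ x) (finiteDiff h θ x')]

theorem LipschitzWith.abs_finiteDiff_sub_finiteDiff_le {θ : ℝ → ℝ} {K : NNReal}
    (hK : LipschitzWith K θ) (h x y : ℝ) :
    |finiteDiff h θ x - finiteDiff h θ (x + y)| ≤ 2 * K * |y| := by
  have h₁ := hK.dist_le_mul (x + h) (x + y + h)
  have h₂ := hK.dist_le_mul x (x + y)
  rw [Real.dist_eq, Real.dist_eq, show x + h - (x + y + h) = -y by ring, abs_neg] at h₁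
  rw [Real.dist_eq, Real.dist_eq, show x - (x + y) = -y by ring, abs_neg] at h₂
  calc |finiteDiff h θ x - finiteDiff h θ (x + y)|
      = |(θ (x + h) - θ (x + y + h)) - (θ x - θ (x + y))| := by
        rw [finiteDiff, finiteDiff]; ring_nf
    _ ≤ K * |y| + K * |y| := (abs_sub _ _).trans (add_le_add h₁ h₂)
    _ = 2 * K * |y| := by ring

theorem abs_intervalIntegral_finiteDiff_le {θ : ℝ → ℝ} {S : ℝ} (hθ : Continuous θ)
    (hS : ∀ z, |θ z| ≤ S) (h u v : ℝ) :
    |∫ y in u..v, finiteDiff h θ y| ≤ 2 * S * |h| := by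
  have hθi : ∀ a b, IntervalIntegrable θ volume a b := hθ.intervalIntegrable
  have hstrip : ∀ a, |∫ y in a..a + h, θ y| ≤ S * |h| := fun a => by
    simpa using intervalIntegral.norm_integral_le_of_norm_le_const
      (a := a) (b := a + h) fun y _ => (Real.norm_eq_abs (θ y)).trans_le (hS y)
  calc |∫ y in u..v, finiteDiff h θ y|
      = |(∫ y in v..v + h, θ y) - ∫ y in u..u + h, θ y| := by
        simp only [finiteDiff]
        have hθh : Continuous fun y => θ (y + h) := hθ.comp (continuous_add_const h)
        rw [intervalIntegral.integral_sub (hθh.intervalIntegrable _ _) (hθi _ _),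
          intervalIntegral.integral_comp_add_right θ,
          intervalIntegral.integral_interval_sub_interval_comm' (hθi _ _) (hθi _ _) (hθi _ _)]
    _ ≤ S * |h| + S * |h| := (abs_sub _ _).trans (add_le_add (hstrip v) (hstrip u))
    _ = 2 * S * |h| := by ring

theorem abs_finiteDiff_pow_three_le {θ : ℝ → ℝ} {S : ℝ} (hθ : Continuous θ)
    (hS : ∀ z, |θ z| ≤ S) (x h : ℝ)
    (hint : Integrable fun y => (finiteDiff h θ x - finiteDiff h θ (x + y)) ^ 2 / |y| ^ 2) :
    |finiteDiff h θ x| ^ 3 ≤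
      64 * S * |h| * ∫ y, (finiteDiff h θ x - finiteDiff h θ (x + y)) ^ 2 / |y| ^ 2 := by
  set a := finiteDiff h θ x
  set D := ∫ y, (a - finiteDiff h θ (x + y)) ^ 2 / |y| ^ 2
  have hS0 : 0 ≤ S := (abs_nonneg _).trans (hS 0)
  have hD : 0 ≤ D := integral_nonneg fun y => by positivity
  rcases eq_or_ne a 0 with ha | ha
  · rw [ha, abs_zero, zero_pow three_ne_zero]; positivity
  have hh : h ≠ 0 := by rintro rfl; simp [a, finiteDiff] at ha
  have hSpos : 0 < S := by linarith [abs_pos.2 ha, abs_finiteDiff_le hS h x]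
  have hc : 0 < S * |h| := mul_pos hSpos (abs_pos.2 hh)
  -- `r|a|` is twice the bound on the mean of `δ_hθ` over `[x + r, x + 2r]`
  set r := 4 * (S * |h|) / |a|
  have hr : 0 < r := div_pos (mul_pos four_pos hc) (abs_pos.2 ha)
  have hra : r * |a| = 4 * (S * |h|) := div_mul_cancel₀ _ (abs_ne_zero.2 ha)
  have hδx : Continuous fun y => finiteDiff h θ (x + y) :=
    (hθ.finiteDiff h).comp (continuous_const_add x)
  have hmean : 2 * (S * |h|) ≤ |∫ y in r..2 * r, (a - finiteDiff h θ (x + y))| := by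
    have hsmall : |∫ y in r..2 * r, finiteDiff h θ (x + y)| ≤ 2 * S * |h| := by
      rw [intervalIntegral.integral_comp_add_left (finiteDiff h θ)]
      exact abs_intervalIntegral_finiteDiff_le hθ hS h _ _
    rw [intervalIntegral.integral_sub intervalIntegrable_const (hδx.intervalIntegrable _ _),
      intervalIntegral.integral_const, smul_eq_mul, show 2 * r - r = r by ring]
    have := abs_sub_abs_le_abs_sub (r * a) (∫ y in r..2 * r, finiteDiff h θ (x + y))
    rw [abs_mul, abs_of_pos hr, hra] at this
    linarith
  have key : (2 * (S * |h|)) ^ 2 ≤ 4 * r ^ 3 * D :=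
    (pow_le_pow_left₀ (by positivity) hmean 2).trans <| (sq_abs _).trans_le <|
      sq_intervalIntegral_le_integral_sq_div_sq (continuous_const.sub hδx) hr hint
  have hscaled : 4 * (S * |h|) ^ 2 * |a| ^ 3 ≤ 4 * (S * |h|) ^ 2 * (64 * S * |h| * D) :=
    calc 4 * (S * |h|) ^ 2 * |a| ^ 3 = (2 * (S * |h|)) ^ 2 * |a| ^ 3 := by ring
      _ ≤ 4 * r ^ 3 * D * |a| ^ 3 := by gcongr
      _ = 4 * (r * |a|) ^ 3 * D := by ring
      _ = 4 * (S * |h|) ^ 2 * (64 * S * |h| * D) := by rw [hra]; ring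
  exact le_of_mul_le_mul_left hscaled (by positivity)

/-- **nonlinear lower bound for the half-Laplacian in 1D.**
There is a universal constant `C > 0` such that for every bounded Lipschitz `θ : ℝ → ℝ`,
every `x` and every `h ≠ 0`, the dissipation integral
`D[δ_hθ](x) = ∫ (δ_hθ(x) − δ_hθ(x+y))² |y|^{−2} dy` is finite and
`C ‖θ‖_{L^∞} |h| D[δ_hθ](x) ≥ |δ_hθ(x)|³`. -/
theorem nonlinear_lower_bound_1d :
    ∃ C : ℝ, 0 < C ∧
      ∀ θ : ℝ → ℝ,
      (∃ M : ℝ, ∀ z, |θ z| ≤ M) → (∃ K : NNReal, LipschitzWith K θ) →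
      ∀ x h : ℝ, h ≠ 0 →
        Integrable (fun y : ℝ =>
          ((θ (x + h) - θ x) - (θ (x + y + h) - θ (x + y))) ^ 2 / |y| ^ 2) ∧
        C * (⨆ z, |θ z|) * |h| *
            (∫ y : ℝ, ((θ (x + h) - θ x) - (θ (x + y + h) - θ (x + y))) ^ 2 / |y| ^ 2) ≥
          |θ (x + h) - θ x| ^ 3 := by
  refine ⟨64, by norm_num, ?_⟩
  rintro θ ⟨M, hM⟩ ⟨K, hK⟩ x h -
  have hθ : Continuous θ := hK.continuous
  have hint : Integrable fun y => (finiteDiff h θ x - finiteDiff h θ (x + y)) ^ 2 / |y| ^ 2 :=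
    integrable_sq_div_sq_of_abs_le
      (continuous_const.sub ((hθ.finiteDiff h).comp (continuous_const_add x))).aestronglyMeasurable
      (fun y => abs_finiteDiff_sub_finiteDiff_le hM h x (x + y))
      (hK.abs_finiteDiff_sub_finiteDiff_le h x)
  have hbdd : BddAbove (Set.range fun z => |θ z|) := ⟨M, Set.forall_mem_range.2 hM⟩
  exact ⟨hint, abs_finiteDiff_pow_three_le hθ (le_ciSup hbdd) x h hint⟩
end

section
/- There exists a universal constant C > 0 with the following property. Let χ : [0,∞) → ℝ be a smooth non-increasing function with χ = 1 on [0,1], χ = 0 on [2,∞), and |χ'| ≤ 2. Let g : ℝ² → ℝ be bounded and Lipschitz continuous, let ρ > 0, and let x ∈ ℝ². Then the vector-valued integral ∫_{ℝ²} (y^⊥/|y|³) χ(|y|/ρ) (g(x+y) − g(x)) dy converges absolutely, and its Euclidean norm is at most C ( ρ ∫_{ℝ²} (g(x) − g(x+y))² |y|^{−3} dy )^{1/2}, where y^⊥ = (−y₂, y₁). -/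
open Real MeasureTheory

/-- The rotation `y ↦ y^⊥ = (−y₂, y₁)` in `ℝ²`. -/
noncomputable def perp (y : EuclideanSpace ℝ (Fin 2)) : EuclideanSpace ℝ (Fin 2) :=
  (EuclideanSpace.equiv (Fin 2) ℝ).symm ![-(y 1), y 0]

open Metric Set

local notation "E2" => EuclideanSpace ℝ (Fin 2)

lemma norm_perp (y : E2) : ‖perp y‖ = ‖y‖ := by
  simp only [perp]
  rw [EuclideanSpace.norm_eq, EuclideanSpace.norm_eq]
  simp [Fin.sum_univ_two, add_comm]

lemma continuous_perp : Continuous perp := by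
  unfold perp
  refine ((EuclideanSpace.equiv (Fin 2) ℝ).symm.continuous).comp ?_
  refine continuous_pi fun i => ?_
  fin_cases i
  · exact ((continuous_apply (1 : Fin 2)).comp (PiLp.continuous_ofLp 2 _)).neg
  · exact (continuous_apply (0 : Fin 2)).comp (PiLp.continuous_ofLp 2 _)

lemma perp_zero : perp (0 : E2) = 0 := by
  have : ‖perp (0:E2)‖ = 0 := by rw [norm_perp]; simp
  simpa using this

lemma integrable_comap_subtype {s : Set ℝ} (hs : MeasurableSet s) {f : ℝ → ℝ}
    (h : IntegrableOn f s volume) :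
    Integrable (fun r : s => f r.1) ((volume : Measure ℝ).comap Subtype.val) := by
  have e : ((volume : Measure ℝ).comap Subtype.val).map (Subtype.val) = volume.restrict s :=
    map_comap_subtype_coe hs _
  exact ((MeasurableEmbedding.subtype_coe hs).integrable_map_iff).mp (by rw [e]; exact h)

lemma aux_integrable {f : ℝ → ℝ} (hf : Measurable f)
    (h : IntegrableOn (fun r => r * f r) (Set.Ioi 0) volume) :
    Integrable (fun y : E2 => f ‖y‖) := by
  have hdim : Module.finrank ℝ E2 = 2 := finrank_euclideanSpace_fin
  have h4 : Integrable (fun r : Set.Ioi (0:ℝ) => f r.1) (Measure.volumeIoiPow 1) := by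
    rw [Measure.volumeIoiPow, integrable_withDensity_iff]
    · apply (integrable_comap_subtype measurableSet_Ioi h).congr
      filter_upwards with r
      have hr : (0:ℝ) < r.1 := r.2
      simp [ENNReal.toReal_ofReal hr.le, mul_comm]
    · exact (measurable_subtype_coe.pow_const 1).ennreal_ofReal
    · filter_upwards with r using ENNReal.ofReal_lt_top
  have h3 : Integrable (fun p : sphere (0:E2) 1 × Set.Ioi (0:ℝ) => f p.2.1)
      ((volume : Measure E2).toSphere.prod (Measure.volumeIoiPow 1)) := by
    have hm : AEStronglyMeasurable (fun p : sphere (0:E2) 1 × Set.Ioi (0:ℝ) => f p.2.1)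
        ((volume : Measure E2).toSphere.prod (Measure.volumeIoiPow 1)) :=
      (hf.comp (measurable_subtype_coe.comp measurable_snd)).aestronglyMeasurable
    rw [integrable_prod_iff hm]
    constructor
    · filter_upwards with z using h4
    · exact (integrable_const (μ := (volume : Measure E2).toSphere)
        (∫ y : Set.Ioi (0:ℝ), ‖f y.1‖ ∂(Measure.volumeIoiPow 1)))
  have h2 : Integrable (fun y : ({(0:E2)}ᶜ : Set E2) => f ‖y.1‖)
      ((volume : Measure E2).comap Subtype.val) := by
    have mp := (volume : Measure E2).measurePreserving_homeomorphUnitSphereProd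
    rw [hdim] at mp
    have := (mp.integrable_comp_emb (Homeomorph.measurableEmbedding _)).mpr h3
    simpa [Function.comp_def, homeomorphUnitSphereProd_apply_snd_coe] using this
  have e : ((volume : Measure E2).comap Subtype.val).map (Subtype.val)
      = volume.restrict ({(0:E2)}ᶜ) :=
    map_comap_subtype_coe (measurableSet_singleton _).compl _
  have h1 : IntegrableOn (fun y : E2 => f ‖y‖) ({(0:E2)}ᶜ) volume := by
    rw [IntegrableOn, ← e,
      (MeasurableEmbedding.subtype_coe (measurableSet_singleton _).compl).integrable_map_iff]
    exact h2
  rwa [IntegrableOn, restrict_compl_singleton] at h1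

lemma aux_integral (f : ℝ → ℝ) :
    ∫ y : E2, f ‖y‖ = 2 * (volume (ball (0:E2) 1)).toReal * ∫ r in Set.Ioi (0:ℝ), r * f r := by
  have := integral_fun_norm_addHaar (volume : Measure E2) f
  rw [finrank_euclideanSpace_fin] at this
  simpa [smul_eq_mul, mul_assoc, ← integral_const_mul, measureReal_def] using this

/-- **inner piece of the velocity estimate.**
There is a universal constant `C > 0` such that for every smooth non-increasing cutoff `χ`
(`χ = 1` on `[0,1]`, `χ = 0` on `[2,∞)`, `|χ'| ≤ 2`), every bounded Lipschitz `g : ℝ² → ℝ`,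
every `ρ > 0` and every `x`, the integral
`∫ (y^⊥/|y|³) χ(|y|/ρ) (g(x+y) − g(x)) dy` converges absolutely and its norm is at most
`C (ρ ∫ (g(x) − g(x+y))² |y|^{−3} dy)^{1/2}`. -/
theorem velocity_inner_piece_estimate :
    ∃ C : ℝ, 0 < C ∧
      ∀ χ : ℝ → ℝ, ContDiff ℝ (⊤ : ℕ∞) χ → AntitoneOn χ (Set.Ici 0) →
      (∀ t ∈ Set.Icc (0 : ℝ) 1, χ t = 1) → (∀ t ∈ Set.Ici (2 : ℝ), χ t = 0) →
      (∀ t ∈ Set.Ici (0 : ℝ), |deriv χ t| ≤ 2) →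
      ∀ g : EuclideanSpace ℝ (Fin 2) → ℝ,
      (∃ M : ℝ, ∀ z, |g z| ≤ M) → (∃ K : NNReal, LipschitzWith K g) →
      ∀ ρ : ℝ, 0 < ρ →
      ∀ x : EuclideanSpace ℝ (Fin 2),
        Integrable (fun y : EuclideanSpace ℝ (Fin 2) =>
          (χ (‖y‖ / ρ) * (g (x + y) - g x) / ‖y‖ ^ 3) • perp y) ∧
        ‖∫ y : EuclideanSpace ℝ (Fin 2),
            (χ (‖y‖ / ρ) * (g (x + y) - g x) / ‖y‖ ^ 3) • perp y‖ ≤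
          C * Real.sqrt (ρ * ∫ y : EuclideanSpace ℝ (Fin 2), (g x - g (x + y)) ^ 2 / ‖y‖ ^ 3) := by
  set c₀ : ℝ := (volume (ball (0:E2) 1)).toReal with hc₀def
  have hc₀pos : 0 < c₀ :=
    ENNReal.toReal_pos (measure_ball_pos _ _ one_pos).ne' measure_ball_lt_top.ne
  refine ⟨Real.sqrt (4 * c₀), Real.sqrt_pos.mpr (by linarith), ?_⟩
  rintro χ hχs hχa hχ1 hχ2 hχ' g ⟨M, hM⟩ ⟨K, hK⟩ ρ hρ x
  have hχc : Continuous χ := hχs.continuous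
  have hgc : Continuous g := hK.continuous
  have hM0 : 0 ≤ M := (abs_nonneg _).trans (hM x)
  have hχ_le_one : ∀ t, 0 ≤ t → χ t ≤ 1 := by
    intro t ht
    calc χ t ≤ χ 0 := hχa (Set.mem_Ici.mpr le_rfl) (Set.mem_Ici.mpr ht) ht
    _ = 1 := hχ1 0 ⟨le_rfl, zero_le_one⟩
  have hχ_nonneg : ∀ t, 0 ≤ t → 0 ≤ χ t := by
    intro t ht
    rcases le_total t 2 with h | h
    · have h2 : χ 2 ≤ χ t := hχa (Set.mem_Ici.mpr ht) (Set.mem_Ici.mpr zero_le_two) h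
      rwa [hχ2 2 (Set.mem_Ici.mpr le_rfl)] at h2
    · rw [hχ2 t (Set.mem_Ici.mpr h)]
  have hh : ∀ y : E2, |g (x + y) - g x| ≤ (K : ℝ) * ‖y‖ := by
    intro y
    have := hK.dist_le_mul (x + y) x
    rwa [Real.dist_eq, dist_eq_norm, add_sub_cancel_left] at this
  have hhM : ∀ y : E2, |g (x + y) - g x| ≤ 2 * M := by
    intro y
    calc |g (x + y) - g x| ≤ |g (x + y)| + |g x| := abs_sub _ _
    _ ≤ M + M := add_le_add (hM _) (hM _)
    _ = 2 * M := by ring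
  -- the two L² functions
  set F₁ : E2 → ℝ := fun y => |g x - g (x + y)| / Real.sqrt (‖y‖ ^ 3) with hF₁def
  set F₂ : E2 → ℝ := fun y => χ (‖y‖ / ρ) / Real.sqrt ‖y‖ with hF₂def
  have hF₁nonneg : ∀ y, 0 ≤ F₁ y := fun y => div_nonneg (abs_nonneg _) (Real.sqrt_nonneg _)
  have hF₂nonneg : ∀ y, 0 ≤ F₂ y :=
    fun y => div_nonneg (hχ_nonneg _ (div_nonneg (norm_nonneg _) hρ.le)) (Real.sqrt_nonneg _)
  have hχ_arg_nonneg : ∀ y : E2, (0:ℝ) ≤ ‖y‖ / ρ := fun y => div_nonneg (norm_nonneg _) hρ.le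
  -- norm identity for the main integrand
  have hEq : ∀ y : E2, ‖(χ (‖y‖ / ρ) * (g (x + y) - g x) / ‖y‖ ^ 3) • perp y‖ = F₁ y * F₂ y := by
    intro y
    by_cases hy : y = 0
    · subst hy
      simp [perp_zero, hF₁def, hF₂def]
    · have h0 : (0:ℝ) < ‖y‖ := norm_pos_iff.mpr hy
      rw [norm_smul, Real.norm_eq_abs, norm_perp, abs_div, abs_mul,
        abs_of_nonneg (hχ_nonneg _ (hχ_arg_nonneg y)), abs_of_nonneg (by positivity : (0:ℝ) ≤ ‖y‖^3)]
      simp only [hF₁def, hF₂def]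
      rw [abs_sub_comm (g x)]
      rw [div_mul_div_comm, ← Real.sqrt_mul (by positivity)]
      rw [show ‖y‖ ^ 3 * ‖y‖ = (‖y‖^2)^2 by ring, Real.sqrt_sq (by positivity)]
      rw [mul_comm (|g (x+y) - g x|) (χ (‖y‖/ρ))]
      field_simp
  -- dominating function for the main integrand
  set fa : ℝ → ℝ := fun r => if r ∈ Set.Ioo (0:ℝ) (2*ρ) then (K:ℝ) * r⁻¹ else 0 with hfadef
  have hfa_meas : Measurable fa :=
    Measurable.ite measurableSet_Ioo (measurable_id.inv.const_mul _) measurable_const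
  have hfa_int : IntegrableOn (fun r => r * fa r) (Set.Ioi 0) volume := by
    have h1 : Integrable ((Set.Ioo (0:ℝ) (2*ρ)).indicator (fun _ => (K:ℝ))) volume :=
      (integrable_indicator_iff measurableSet_Ioo).mpr
        (integrableOn_const measure_Ioo_lt_top.ne)
    apply (h1.integrableOn).congr
    filter_upwards with r
    by_cases hr : r ∈ Set.Ioo (0:ℝ) (2*ρ)
    · simp only [Set.indicator_of_mem hr, hfadef, if_pos hr]
      rw [mul_comm ((K:ℝ)) r⁻¹, ← mul_assoc, mul_inv_cancel₀ hr.1.ne', one_mul]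
    · rw [Set.indicator_of_notMem hr]
      simp only [hfadef]
      rw [if_neg hr, mul_zero]
  have hGa : Integrable (fun y : E2 => fa ‖y‖) := aux_integrable hfa_meas hfa_int
  -- measurability of the main integrand
  have hmeas_main : AEStronglyMeasurable (fun y : E2 =>
      (χ (‖y‖ / ρ) * (g (x + y) - g x) / ‖y‖ ^ 3) • perp y) volume := by
    apply Measurable.aestronglyMeasurable
    refine Measurable.smul (f := fun y : E2 => χ (‖y‖ / ρ) * (g (x + y) - g x) / ‖y‖ ^ 3) (g := perp) ?_ ?_
    · exact (((hχc.comp (continuous_norm.div_const ρ)).mul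
        ((hgc.comp (continuous_const.add continuous_id)).sub continuous_const)).measurable).div
        (measurable_norm.pow_const 3)
    · exact continuous_perp.measurable
  -- pointwise bound for the main integrand
  have hbound_main : ∀ y : E2,
      ‖(χ (‖y‖ / ρ) * (g (x + y) - g x) / ‖y‖ ^ 3) • perp y‖ ≤ fa ‖y‖ := by
    intro y
    rw [hEq y]
    by_cases hy : y = 0
    · subst hy
      simp [hF₁def, hF₂def, hfadef, hρ]
    · have h0 : (0:ℝ) < ‖y‖ := norm_pos_iff.mpr hy
      by_cases h2ρ : ‖y‖ < 2*ρ
      · have hfa_eq : fa ‖y‖ = (K:ℝ) * ‖y‖⁻¹ := by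
          simp [hfadef, Set.mem_Ioo, h0, h2ρ]
        rw [hfa_eq]
        simp only [hF₁def, hF₂def]
        rw [div_mul_div_comm, ← Real.sqrt_mul (by positivity),
          show ‖y‖ ^ 3 * ‖y‖ = (‖y‖^2)^2 by ring, Real.sqrt_sq (by positivity)]
        rw [abs_sub_comm (g x)]
        rw [div_le_iff₀ (by positivity)]
        have step1 : |g (x + y) - g x| * χ (‖y‖ / ρ) ≤ ((K:ℝ) * ‖y‖) * 1 :=
          mul_le_mul (hh y) (hχ_le_one _ (hχ_arg_nonneg y))
            (hχ_nonneg _ (hχ_arg_nonneg y)) (by positivity)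
        have step2 : (K:ℝ) * ‖y‖⁻¹ * ‖y‖ ^ 2 = (K:ℝ) * ‖y‖ := by
          field_simp
        rw [step2]
        linarith
      · have hχ0 : χ (‖y‖ / ρ) = 0 := by
          apply hχ2
          rw [Set.mem_Ici, le_div_iff₀ hρ]
          linarith [not_lt.mp h2ρ]
        have hF₂0 : F₂ y = 0 := by simp [hF₂def, hχ0]
        rw [hF₂0, mul_zero]
        simp only [hfadef]
        rw [if_neg (by simp [Set.mem_Ioo]; intro _; linarith [not_lt.mp h2ρ])]
  -- first conjunct : integrability
  have hint_main : Integrable (fun y : E2 =>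
      (χ (‖y‖ / ρ) * (g (x + y) - g x) / ‖y‖ ^ 3) • perp y) volume :=
    hGa.mono' hmeas_main (Filter.Eventually.of_forall hbound_main)
  refine ⟨hint_main, ?_⟩
  -- integrability of the D-integrand
  set fb : ℝ → ℝ := fun r => if r ≤ 1 then (K:ℝ)^2 * r⁻¹ else (2*M)^2 * (r^3)⁻¹ with hfbdef
  have hfb_meas : Measurable fb :=
    Measurable.ite measurableSet_Iic (measurable_id.inv.const_mul _)
      ((measurable_id.pow_const 3).inv.const_mul _)
  have hfb_int : IntegrableOn (fun r => r * fb r) (Set.Ioi 0) volume := by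
    rw [← Set.Ioc_union_Ioi_eq_Ioi (zero_le_one : (0:ℝ) ≤ 1)]
    apply IntegrableOn.union
    · apply Integrable.congr (integrableOn_const (C := (K:ℝ)^2) measure_Ioc_lt_top.ne)
      filter_upwards [ae_restrict_mem measurableSet_Ioc] with r hr
      simp only [hfbdef]
      rw [if_pos hr.2, mul_comm ((K:ℝ)^2) r⁻¹, ← mul_assoc, mul_inv_cancel₀ hr.1.ne', one_mul]
    · apply Integrable.congr
        ((integrableOn_Ioi_rpow_of_lt (by norm_num : (-2:ℝ) < -1) one_pos).const_mul ((2*M)^2))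
      filter_upwards [ae_restrict_mem measurableSet_Ioi] with r hr
      have hr0 : (0:ℝ) < r := lt_trans one_pos hr
      simp only [hfbdef]
      rw [if_neg (not_le.mpr hr), Real.rpow_neg hr0.le,
        show (2:ℝ) = ((2:ℕ):ℝ) by norm_num, Real.rpow_natCast]
      field_simp
  have hD_int : Integrable (fun y : E2 => (g x - g (x + y)) ^ 2 / ‖y‖ ^ 3) volume := by
    apply (aux_integrable hfb_meas hfb_int).mono'
    · exact (((continuous_const.sub (hgc.comp (continuous_const.add continuous_id))).pow
        2).measurable.div (measurable_norm.pow_const 3)).aestronglyMeasurable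
    · filter_upwards with y
      rw [Real.norm_eq_abs, abs_of_nonneg (by positivity)]
      by_cases h1 : ‖y‖ ≤ 1
      · simp only [hfbdef]
        rw [if_pos h1]
        by_cases hy : y = 0
        · subst hy; simp
        · have h0 : (0:ℝ) < ‖y‖ := norm_pos_iff.mpr hy
          have hnum : (g x - g (x+y))^2 ≤ ((K:ℝ)*‖y‖)^2 := by
            rw [← sq_abs, abs_sub_comm]
            exact pow_le_pow_left₀ (abs_nonneg _) (hh y) 2
          calc (g x - g (x+y))^2/‖y‖^3 ≤ ((K:ℝ)*‖y‖)^2/‖y‖^3 := by gcongr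
          _ = (K:ℝ)^2 * ‖y‖⁻¹ := by field_simp
      · simp only [hfbdef]
        rw [if_neg h1]
        have h0 : (0:ℝ) < ‖y‖ := lt_trans one_pos (not_le.mp h1)
        have hnum : (g x - g (x+y))^2 ≤ (2*M)^2 := by
          rw [← sq_abs, abs_sub_comm]
          exact pow_le_pow_left₀ (abs_nonneg _) (hhM y) 2
        calc (g x - g (x+y))^2/‖y‖^3 ≤ (2*M)^2/‖y‖^3 := by gcongr
        _ = (2*M)^2 * (‖y‖^3)⁻¹ := div_eq_mul_inv _ _
  set D : ℝ := ∫ y : E2, (g x - g (x + y)) ^ 2 / ‖y‖ ^ 3 with hDdef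
  have hD0 : 0 ≤ D := integral_nonneg (fun y => by positivity)
  have hF₁sq_eq : ∀ y : E2, F₁ y ^ 2 = (g x - g (x + y)) ^ 2 / ‖y‖ ^ 3 := by
    intro y
    simp only [hF₁def]
    rw [div_pow, sq_abs, Real.sq_sqrt (by positivity)]
  have hF₁sq : Integrable (fun y : E2 => F₁ y ^ 2) volume :=
    hD_int.congr (Filter.Eventually.of_forall fun y => (hF₁sq_eq y).symm)
  -- F₂ squared
  set fc : ℝ → ℝ := fun r => if r ∈ Set.Ioo (0:ℝ) (2*ρ) then r⁻¹ else 0 with hfcdef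
  have hfc_meas : Measurable fc :=
    Measurable.ite measurableSet_Ioo measurable_id.inv measurable_const
  have hfc_eq : (fun r => r * fc r) = (Set.Ioo (0:ℝ) (2*ρ)).indicator (fun _ => (1:ℝ)) := by
    funext r
    by_cases hr : r ∈ Set.Ioo (0:ℝ) (2*ρ)
    · rw [Set.indicator_of_mem hr]
      simp only [hfcdef]
      rw [if_pos hr, mul_inv_cancel₀ hr.1.ne']
    · rw [Set.indicator_of_notMem hr]
      simp only [hfcdef]
      rw [if_neg hr, mul_zero]
  have hfc_int : IntegrableOn (fun r => r * fc r) (Set.Ioi 0) volume := by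
    rw [hfc_eq]
    exact ((integrable_indicator_iff measurableSet_Ioo).mpr
      (integrableOn_const measure_Ioo_lt_top.ne)).integrableOn
  have hGc : Integrable (fun y : E2 => fc ‖y‖) := aux_integrable hfc_meas hfc_int
  have hF₂sq_bound : ∀ y : E2, F₂ y ^ 2 ≤ fc ‖y‖ := by
    intro y
    have hsq : F₂ y ^ 2 = χ (‖y‖/ρ)^2 / ‖y‖ := by
      simp only [hF₂def]
      rw [div_pow, Real.sq_sqrt (norm_nonneg _)]
    rw [hsq]
    by_cases hy : y = 0
    · subst hy
      simp only [hfcdef]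
      simp
    · have h0 : (0:ℝ) < ‖y‖ := norm_pos_iff.mpr hy
      by_cases h2ρ : ‖y‖ < 2*ρ
      · simp only [hfcdef]
        rw [if_pos (Set.mem_Ioo.mpr ⟨h0, h2ρ⟩)]
        have hχle : χ (‖y‖/ρ)^2 ≤ 1 :=
          pow_le_one₀ (hχ_nonneg _ (hχ_arg_nonneg y)) (hχ_le_one _ (hχ_arg_nonneg y))
        calc χ (‖y‖/ρ)^2/‖y‖ ≤ 1/‖y‖ := by gcongr
        _ = ‖y‖⁻¹ := one_div _
      · have hχ0 : χ (‖y‖ / ρ) = 0 :=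
          hχ2 _ (by rw [Set.mem_Ici, le_div_iff₀ hρ]; linarith [not_lt.mp h2ρ])
        simp only [hfcdef]
        rw [hχ0, if_neg (by simp [Set.mem_Ioo]; intro _; linarith [not_lt.mp h2ρ])]
        simp
  have hF₂sq : Integrable (fun y : E2 => F₂ y ^ 2) volume := by
    apply hGc.mono'
    · exact (((hχc.comp ((continuous_norm).div_const ρ)).measurable.div
        (Real.continuous_sqrt.comp continuous_norm).measurable).pow_const 2).aestronglyMeasurable
    · filter_upwards with y
      rw [Real.norm_eq_abs, abs_of_nonneg (by positivity)]
      exact hF₂sq_bound y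
  -- value of the comparison integral
  have hIc : ∫ y : E2, fc ‖y‖ = 2 * c₀ * (2*ρ) := by
    rw [aux_integral fc, ← hc₀def]
    have hval : ∫ r in Set.Ioi (0:ℝ), r * fc r = 2*ρ := by
      rw [hfc_eq, setIntegral_indicator measurableSet_Ioo,
        Set.inter_eq_self_of_subset_right Set.Ioo_subset_Ioi_self, setIntegral_const,
        Real.volume_real_Ioo]
      rw [smul_eq_mul, mul_one, max_eq_left (by linarith)]
      ring
    rw [hval]
  have hF₂int_le : ∫ y : E2, F₂ y ^ 2 ≤ 2 * c₀ * (2*ρ) := by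
    rw [← hIc]
    exact integral_mono hF₂sq hGc hF₂sq_bound
  -- Hölder
  have hconj : Real.HolderConjugate 2 2 := Real.HolderConjugate.two_two
  have h2 : ENNReal.ofReal (2:ℝ) = 2 := by norm_num
  have hmem₁ : MemLp F₁ (ENNReal.ofReal 2) volume := by
    rw [h2]
    refine (memLp_two_iff_integrable_sq ?_).mpr hF₁sq
    exact ((continuous_const.sub (hgc.comp (continuous_const.add continuous_id))).abs.measurable.div
      (Real.continuous_sqrt.comp (continuous_norm.pow 3)).measurable).aestronglyMeasurable
  have hmem₂ : MemLp F₂ (ENNReal.ofReal 2) volume := by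
    rw [h2]
    refine (memLp_two_iff_integrable_sq ?_).mpr hF₂sq
    exact ((hχc.comp ((continuous_norm).div_const ρ)).measurable.div
      (Real.continuous_sqrt.comp continuous_norm).measurable).aestronglyMeasurable
  have key := integral_mul_le_Lp_mul_Lq_of_nonneg hconj
    (Filter.Eventually.of_forall hF₁nonneg) (Filter.Eventually.of_forall hF₂nonneg) hmem₁ hmem₂
  simp_rw [Real.rpow_two] at key
  rw [← Real.sqrt_eq_rpow, ← Real.sqrt_eq_rpow] at key
  calc ‖∫ y : E2, (χ (‖y‖ / ρ) * (g (x + y) - g x) / ‖y‖ ^ 3) • perp y‖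
      ≤ ∫ y : E2, ‖(χ (‖y‖ / ρ) * (g (x + y) - g x) / ‖y‖ ^ 3) • perp y‖ :=
        norm_integral_le_integral_norm _
  _ = ∫ y : E2, F₁ y * F₂ y := integral_congr_ae (Filter.Eventually.of_forall hEq)
  _ ≤ Real.sqrt (∫ y : E2, F₁ y ^ 2) * Real.sqrt (∫ y : E2, F₂ y ^ 2) := key
  _ ≤ Real.sqrt D * Real.sqrt (2 * c₀ * (2*ρ)) := by
      have e1 : ∫ y : E2, F₁ y ^ 2 = D := by
        rw [hDdef]
        exact integral_congr_ae (Filter.Eventually.of_forall fun y => hF₁sq_eq y)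
      rw [e1]
      exact mul_le_mul_of_nonneg_left (Real.sqrt_le_sqrt hF₂int_le) (Real.sqrt_nonneg _)
  _ = Real.sqrt (4*c₀) * Real.sqrt (ρ * D) := by
      rw [show 2*c₀*(2*ρ) = (4*c₀)*ρ by ring, Real.sqrt_mul (by positivity) ρ,
        Real.sqrt_mul hρ.le D]
      ring
end

section
/- Let a > 0 and b > 0, and let g : [0,∞) → [0,∞) be differentiable with g'(t) ≤ b − a g(t)^{3/2} for every t ≥ 0. Then for every t ≥ g(0)/(7b), g(t) ≤ 4 (b/a)^{2/3}. -/
/-!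
Put `M = 4 (b/a)^{2/3}`, so that `a M^{3/2} = 8b`: wherever `g ≥ M` the inequality gives
`g' ≤ -7b`. Fix `t` and let `u` be the last time in `[0, t]` with `g u ≤ M`. On `(u, t)` the
function decreases at rate at least `7b`, so `g t ≤ g u ≤ M`; if there is no such time, then
`g t ≤ g 0 - 7b t ≤ 0` for `t ≥ g 0 / (7b)`.
-/

open Set

section Absorbing

variable {f f' : ℝ → ℝ} {M c : ℝ}
  (hf : ∀ x, 0 ≤ x → HasDerivWithinAt f (f' x) (Ici 0) x)
  (hdecay : ∀ x, 0 ≤ x → M ≤ f x → f' x ≤ -c)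
include hf

theorem continuousOn_Icc_of_hasDerivWithinAt_Ici (t : ℝ) : ContinuousOn f (Icc 0 t) :=
  fun x hx => (hf x hx.1).continuousWithinAt.mono Icc_subset_Ici_self

include hdecay in
theorem sub_le_neg_mul_of_lt_on_Ioo {u t : ℝ} (hu : 0 ≤ u) (hut : u ≤ t)
    (hlt : ∀ x ∈ Ioo u t, M < f x) : f t - f u ≤ -c * (t - u) := by
  have hderiv : ∀ x ∈ interior (Icc u t), HasDerivAt f (f' x) x := fun x hx => by
    rw [interior_Icc] at hx
    exact (hf x (hu.trans hx.1.le)).hasDerivAt (Ici_mem_nhds (hu.trans_lt hx.1))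
  refine (convex_Icc u t).image_sub_le_mul_sub_of_deriv_le
    ((continuousOn_Icc_of_hasDerivWithinAt_Ici hf t).mono (Icc_subset_Icc_left hu))
    (fun x hx => (hderiv x hx).differentiableAt.differentiableWithinAt)
    (fun x hx => ?_) u (left_mem_Icc.2 hut) t (right_mem_Icc.2 hut) hut
  rw [(hderiv x hx).deriv]
  rw [interior_Icc] at hx
  exact hdecay x (hu.trans hx.1.le) (hlt x hx).le

include hdecay in
theorem le_max_sub_mul_of_deriv_le_neg (hc : 0 ≤ c) {t : ℝ} (ht : 0 ≤ t) :
    f t ≤ max M (f 0 - c * t) := by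
  set S := Icc 0 t ∩ f ⁻¹' Iic M
  have hS : IsCompact S := isCompact_Icc.of_isClosed_subset
    ((continuousOn_Icc_of_hasDerivWithinAt_Ici hf t).preimage_isClosed_of_isClosed
      isClosed_Icc isClosed_Iic) inter_subset_left
  rcases S.eq_empty_or_nonempty with hempty | hne
  · have hlt : ∀ x ∈ Ioo 0 t, M < f x := fun x hx => not_le.1 fun hle =>
      hempty.subset ⟨Ioo_subset_Icc_self hx, hle⟩
    have := sub_le_neg_mul_of_lt_on_Ioo hf hdecay le_rfl ht hlt
    exact le_max_of_le_right (by linarith)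
  · obtain ⟨u, ⟨⟨hu, hut⟩, hfu⟩, hlast⟩ := hS.exists_isGreatest hne
    have hlt : ∀ x ∈ Ioo u t, M < f x := fun x hx => not_le.1 fun hle =>
      (hlast ⟨⟨hu.trans hx.1.le, hx.2.le⟩, hle⟩).not_gt hx.1
    have := sub_le_neg_mul_of_lt_on_Ioo hf hdecay hu hut hlt
    have : 0 ≤ c * (t - u) := mul_nonneg hc (sub_nonneg.2 hut)
    exact le_max_of_le_left (by linarith [show f u ≤ M from hfu])

end Absorbing

theorem mul_four_mul_div_rpow_two_thirds_rpow_three_halves {a b : ℝ} (ha : 0 < a) (hb : 0 ≤ b) :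
    a * (4 * (b / a) ^ ((2 : ℝ) / 3)) ^ ((3 : ℝ) / 2) = 8 * b := by
  have hba : 0 ≤ b / a := div_nonneg hb ha.le
  have hfour : (4 : ℝ) ^ ((3 : ℝ) / 2) = 8 := by
    rw [show (4 : ℝ) = 2 ^ (2 : ℝ) by norm_num, ← Real.rpow_mul zero_le_two]
    norm_num
  rw [Real.mul_rpow (by norm_num) (Real.rpow_nonneg hba _), ← Real.rpow_mul hba, hfour]
  norm_num
  field_simp

/-- If `g : [0,∞) → [0,∞)` is differentiable and satisfies the Riccati-type
differential inequality `g'(t) ≤ b - a g(t)^{3/2}` for all `t ≥ 0` (with `a, b > 0`), then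
for every `t ≥ g(0)/(7b)` one has `g(t) ≤ 4 (b/a)^{2/3}`. -/
theorem riccati_absorbing (a b : ℝ) (ha : 0 < a) (hb : 0 < b)
    (g g' : ℝ → ℝ)
    (hg_nonneg : ∀ t, 0 ≤ t → 0 ≤ g t)
    (hg_deriv : ∀ t, 0 ≤ t → HasDerivWithinAt g (g' t) (Set.Ici 0) t)
    (hg_ineq : ∀ t, 0 ≤ t → g' t ≤ b - a * g t ^ ((3 : ℝ) / 2)) :
    ∀ t, g 0 / (7 * b) ≤ t → g t ≤ 4 * (b / a) ^ ((2 : ℝ) / 3) := by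
  intro t ht
  set M := 4 * (b / a) ^ ((2 : ℝ) / 3)
  have hdecay : ∀ x, 0 ≤ x → M ≤ g x → g' x ≤ -(7 * b) := fun x hx hMx => by
    have : a * M ^ ((3 : ℝ) / 2) ≤ a * g x ^ ((3 : ℝ) / 2) :=
      mul_le_mul_of_nonneg_left (Real.rpow_le_rpow (by positivity) hMx (by norm_num)) ha.le
    linarith [hg_ineq x hx, mul_four_mul_div_rpow_two_thirds_rpow_three_halves ha hb.le]
  have h7b : 0 < 7 * b := by positivity
  have hgt : g 0 ≤ 7 * b * t := by rwa [div_le_iff₀' h7b] at ht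
  have ht0 : 0 ≤ t := le_of_mul_le_mul_left (by linarith [hg_nonneg 0 le_rfl]) h7b
  have hM : 0 ≤ M := by positivity
  exact (le_max_sub_mul_of_deriv_le_neg hg_deriv hdecay h7b.le ht0).trans
    (max_le le_rfl (by linarith))
end

section
/- Let T > 0, let d ≥ 1, and let K ⊂ ℝ^d be a nonempty compact set. Let f : (0,T) × K → [0,∞) and ḟ : (0,T) × K → ℝ be functions such that: (a) for every λ ∈ K and t ∈ (0,T), the function t ↦ f(t,λ) is differentiable at t with derivative ḟ(t,λ), and the functions t ↦ f(t,λ) and t ↦ ḟ(t,λ) are continuous on (0,T); (b) the families {f(·,λ)}_{λ∈K} and {ḟ(·,λ)}_{λ∈K} are uniformly equicontinuous with respect to t, i.e., for every ε > 0 there is δ > 0 such that for all λ ∈ K and all t,s ∈ (0,T) with |t−s| < δ one has |f(t,λ) − f(s,λ)| < ε and |ḟ(t,λ) − ḟ(s,λ)| < ε; (c) for every t ∈ (0,T), the functions λ ↦ f(t,λ) and λ ↦ ḟ(t,λ) are continuous on K. Define F(t) = sup_{λ∈K} f(t,λ). Then for almost every t ∈ (0,T), F is differentiable at t and there exists λ*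 ∈ K such that simultaneously F(t) = f(t,λ*) and F'(t) = ḟ(t,λ*). -/
open MeasureTheory Set Filter Topology
open scoped NNReal

/-! Each `ḟ(·,λ)` is bounded at `T/2` uniformly in `λ` (continuity on the compact `K`), and
chaining steps of length `< δ` from equicontinuity bounds it on all of `(0,T)` uniformly in `λ`.
By the mean value theorem the `f(·,λ)` are then uniformly Lipschitz, hence so is their supremum
`F`, which by Rademacher's theorem is differentiable almost everywhere. At such a point `t`,
if `λ*` maximizes `f(t,·)`, then `F - f(·,λ*) ≥ 0` has a minimum at `t`, so
`F'(t) = ḟ(t,λ*)`. -/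

theorem Convex.dist_comp_le_of_dist_lt {E X : Type*} [NormedAddCommGroup E] [NormedSpace ℝ E]
    [PseudoMetricSpace X] {S : Set E} (hS : Convex ℝ S) {g : E → X} {δ ε : ℝ}
    (hg : ∀ x ∈ S, ∀ y ∈ S, dist x y < δ → dist (g x) (g y) ≤ ε) (n : ℕ) :
    ∀ x ∈ S, ∀ y ∈ S, dist x y < (n + 1) * δ → dist (g x) (g y) ≤ (n + 1) * ε := by
  induction n with
  | zero => simpa using hg
  | succ n ih =>
    intro x hx y hy hxy
    set c : ℝ := ((n : ℝ) + 2)⁻¹ with hc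
    have hc0 : 0 < c := by positivity
    have hc1 : c ≤ 1 := inv_le_one_of_one_le₀ (by linarith [n.cast_nonneg (α := ℝ)])
    set z := AffineMap.lineMap y x c
    have hz : z ∈ S := hS.lineMap_mem hy hx ⟨hc0.le, hc1⟩
    have hzy : dist z y < δ := by
      rw [dist_lineMap_left, Real.norm_of_nonneg hc0.le, dist_comm, hc,
        inv_mul_lt_iff₀ (by positivity)]
      push_cast at hxy
      linarith
    have hxz : dist x z < (n + 1) * δ := by
      have h1c : 1 - c = (n + 1) * c := by rw [hc]; field_simp; ring
      rw [dist_comm, dist_lineMap_right, Real.norm_of_nonneg (by linarith), dist_comm, h1c,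
        mul_assoc]
      refine mul_lt_mul_of_pos_left ?_ (by positivity)
      rw [hc, inv_mul_lt_iff₀ (by positivity)]
      push_cast at hxy
      linarith
    calc dist (g x) (g y) ≤ dist (g x) (g z) + dist (g z) (g y) := dist_triangle _ _ _
      _ ≤ (n + 1) * ε + ε := add_le_add (ih x hx z hz hxz) (hg z hz y hy hzy)
      _ = ((n + 1 : ℕ) + 1) * ε := by push_cast; ring

theorem Convex.exists_norm_le_of_uniform_equicontinuousOn {E ι F : Type*} [NormedAddCommGroup E]
    [NormedSpace ℝ E] [SeminormedAddCommGroup F] {S : Set E} (hS : Convex ℝ S)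
    (hSb : Bornology.IsBounded S) {x₀ : E} (hx₀ : x₀ ∈ S) {K : Set ι} {g : E → ι → F}
    {C δ ε : ℝ} (hC : ∀ i ∈ K, ‖g x₀ i‖ ≤ C) (hδ : 0 < δ)
    (hg : ∀ i ∈ K, ∀ x ∈ S, ∀ y ∈ S, dist x y < δ → dist (g x i) (g y i) ≤ ε) :
    ∃ M, ∀ i ∈ K, ∀ x ∈ S, ‖g x i‖ ≤ M := by
  obtain ⟨D, hD⟩ := Metric.isBounded_iff.1 hSb
  obtain ⟨n, hn⟩ := exists_nat_gt (D / δ)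
  refine ⟨C + (n + 1) * ε, fun i hi x hx => ?_⟩
  have hxx₀ : dist x x₀ < (n + 1) * δ :=
    (hD hx hx₀).trans_lt <| by rw [div_lt_iff₀ hδ] at hn; linarith
  calc ‖g x i‖ ≤ ‖g x₀ i‖ + dist (g x i) (g x₀ i) := by
        rw [dist_eq_norm]; exact norm_le_norm_add_norm_sub' _ _
    _ ≤ C + (n + 1) * ε :=
        add_le_add (hC i hi) (hS.dist_comp_le_of_dist_lt (hg i hi) n x hx x₀ hx₀ hxx₀)

theorem LipschitzOnWith.sSup_image {α ι : Type*} [PseudoMetricSpace α] {K : Set ι}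
    (hK : K.Nonempty) {f : α → ι → ℝ} {s : Set α} {C : ℝ≥0}
    (hf : ∀ i ∈ K, LipschitzOnWith C (f · i) s) (hbdd : ∀ x ∈ s, BddAbove (f x '' K)) :
    LipschitzOnWith C (fun x => sSup (f x '' K)) s := by
  refine LipschitzOnWith.of_le_add_mul C fun x hx y hy => csSup_le (hK.image _) ?_
  rintro _ ⟨i, hi, rfl⟩
  calc f x i ≤ f y i + C * dist x y := (hf i hi).le_add_mul hx hy
    _ ≤ sSup (f y '' K) + C * dist x y := by
        gcongr; exact le_csSup (hbdd y hy) (mem_image_of_mem _ hi)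

theorem DifferentiableAt.hasDerivAt_of_eventually_le_of_eq {F g : ℝ → ℝ} {g' t : ℝ}
    (hF : DifferentiableAt ℝ F t) (hg : HasDerivAt g g' t) (hle : ∀ᶠ s in 𝓝 t, g s ≤ F s)
    (heq : F t = g t) : HasDerivAt F g' t := by
  have hmin : IsLocalMin (fun s => F s - g s) t := by
    filter_upwards [hle] with s hs
    simp only [heq, sub_self, sub_nonneg, hs]
  have hderiv : deriv F t - g' = 0 := hmin.hasDerivAt_eq_zero (hF.hasDerivAt.sub hg)
  exact sub_eq_zero.mp hderiv ▸ hF.hasDerivAt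

theorem ae_deriv_sup_eq_deriv_at_max_general (T : ℝ) (hT : 0 < T) (d : ℕ)
    (K : Set (EuclideanSpace ℝ (Fin d))) (hK : IsCompact K) (hKne : K.Nonempty)
    (f fdot : ℝ → EuclideanSpace ℝ (Fin d) → ℝ)
    (hf_deriv : ∀ lam ∈ K, ∀ t ∈ Set.Ioo 0 T, HasDerivAt (fun s => f s lam) (fdot t lam) t)
    (hequi : ∀ ε > 0, ∃ δ > 0, ∀ lam ∈ K, ∀ t ∈ Set.Ioo 0 T, ∀ s ∈ Set.Ioo 0 T,
      |t - s| < δ → |f t lam - f s lam| < ε ∧ |fdot t lam - fdot s lam| < ε)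
    (hf_cont_lam : ∀ t ∈ Set.Ioo 0 T, ContinuousOn (f t) K)
    (hfdot_cont_lam : ∀ t ∈ Set.Ioo 0 T, ContinuousOn (fdot t) K) :
    ∀ᵐ t ∂(volume.restrict (Set.Ioo 0 T)),
      ∃ lam ∈ K, sSup (f t '' K) = f t lam ∧
        HasDerivAt (fun s => sSup (f s '' K)) (fdot t lam) t := by
  have hmid : T / 2 ∈ Ioo 0 T := ⟨by positivity, by linarith⟩
  obtain ⟨C, hC⟩ := hK.exists_bound_of_continuousOn (hfdot_cont_lam _ hmid)
  obtain ⟨δ, hδ, hδequi⟩ := hequi 1 one_pos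
  obtain ⟨M, hM⟩ := (convex_Ioo 0 T).exists_norm_le_of_uniform_equicontinuousOn
    (Metric.isBounded_Ioo 0 T) hmid hC hδ fun lam hlam t ht s hs hts =>
      (hδequi lam hlam t ht s hs hts).2.le
  have hlip : ∀ lam ∈ K, LipschitzOnWith M.toNNReal (f · lam) (Ioo 0 T) := fun lam hlam =>
    (convex_Ioo 0 T).lipschitzOnWith_of_nnnorm_hasDerivWithin_le
      (fun t ht => (hf_deriv lam hlam t ht).hasDerivWithinAt) fun t ht =>
        (Real.le_toNNReal_iff_coe_le ((norm_nonneg _).trans (hM lam hlam t ht))).2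
          (hM lam hlam t ht)
  have hbdd : ∀ t ∈ Ioo 0 T, BddAbove (f t '' K) := fun t ht =>
    hK.bddAbove_image (hf_cont_lam t ht)
  rw [ae_restrict_iff' measurableSet_Ioo]
  have hFlip := LipschitzOnWith.sSup_image hKne hlip hbdd
  filter_upwards [hFlip.ae_differentiableWithinAt_of_mem_of_real] with t hdiff ht
  obtain ⟨lam, hlam, hmax⟩ := hK.exists_sSup_image_eq hKne (hf_cont_lam t ht)
  refine ⟨lam, hlam, hmax, ?_⟩
  refine ((hdiff ht).differentiableAt (Ioo_mem_nhds ht.1 ht.2)).hasDerivAt_of_eventually_le_of_eq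
    (hf_deriv lam hlam t ht) ?_ hmax
  filter_upwards [Ioo_mem_nhds ht.1 ht.2] with s hs
  exact le_csSup (hbdd s hs) (mem_image_of_mem _ hlam)

/-- **interchanging the spatial supremum with the time derivative.**
Under differentiability in time, uniform equicontinuity in time, and continuity in the
parameter over a compact set `K`, the supremum `F(t) = sup_{λ∈K} f(t,λ)` is, for almost
every `t ∈ (0,T)`, differentiable at `t` with derivative `ḟ(t,λ*)` for some maximizer
`λ* ∈ K` with `F(t) = f(t,λ*)`. -/
theorem ae_deriv_sup_eq_deriv_at_max (T : ℝ) (hT : 0 < T) (d : ℕ) (hd : 1 ≤ d)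
    (K : Set (EuclideanSpace ℝ (Fin d))) (hK : IsCompact K) (hKne : K.Nonempty)
    (f fdot : ℝ → EuclideanSpace ℝ (Fin d) → ℝ)
    (hf_nonneg : ∀ t ∈ Set.Ioo 0 T, ∀ lam ∈ K, 0 ≤ f t lam)
    (hf_deriv : ∀ lam ∈ K, ∀ t ∈ Set.Ioo 0 T, HasDerivAt (fun s => f s lam) (fdot t lam) t)
    (hf_cont_t : ∀ lam ∈ K, ContinuousOn (fun t => f t lam) (Set.Ioo 0 T))
    (hfdot_cont_t : ∀ lam ∈ K, ContinuousOn (fun t => fdot t lam) (Set.Ioo 0 T))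
    (hequi : ∀ ε > 0, ∃ δ > 0, ∀ lam ∈ K, ∀ t ∈ Set.Ioo 0 T, ∀ s ∈ Set.Ioo 0 T,
      |t - s| < δ → |f t lam - f s lam| < ε ∧ |fdot t lam - fdot s lam| < ε)
    (hf_cont_lam : ∀ t ∈ Set.Ioo 0 T, ContinuousOn (f t) K)
    (hfdot_cont_lam : ∀ t ∈ Set.Ioo 0 T, ContinuousOn (fdot t) K) :
    ∀ᵐ t ∂(volume.restrict (Set.Ioo 0 T)),
      ∃ lam ∈ K, sSup (f t '' K) = f t lam ∧
        HasDerivAt (fun s => sSup (f s '' K)) (fdot t lam) t :=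
  ae_deriv_sup_eq_deriv_at_max_general T hT d K hK hKne f fdot hf_deriv hequi hf_cont_lam
    hfdot_cont_lam
end

section
/- Let x, a, b : [0,∞) → [0,∞) be continuous functions with x differentiable on (0,∞) and x'(t) ≤ a(t) x(t) + b(t) for all t > 0. Suppose there exist r > 0, t₀ ≥ 0, and constants X, A, B ≥ 0 such that for all t ≥ t₀: ∫_t^{t+r} x(s) ds ≤ X, ∫_t^{t+r} a(s) ds ≤ A, and ∫_t^{t+r} b(s) ds ≤ B. Then for all t ≥ t₀ + r, x(t) ≤ (X/r + B) e^A. -/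
/-!
On `[s, t]` the integrating factor makes `x e^{-∫ₛa} - ∫ₛb` antitone (its derivative is at most
`b (e^{-∫ₛa} - 1) ≤ 0`), which is Grönwall's bound `x t ≤ (x s + ∫ₛᵗ b) e^{∫ₛᵗ a}`. For `t ≥ t₀ + r`
and every `s` in the window `[t - r, t]` this gives `x t ≤ (x s + B) e^A`, independently of `s`;
averaging over the window turns `x s` into `r⁻¹ ∫ x ≤ X / r`.
-/

open MeasureTheory Set Real

theorem hasDerivAt_integral_of_continuousOn_Icc {f : ℝ → ℝ} {s t u : ℝ}
    (hf : ContinuousOn f (Icc s t)) (hu : u ∈ Ioo s t) :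
    HasDerivAt (fun v => ∫ w in s..v, f w) (f u) u :=
  intervalIntegral.integral_hasDerivAt_right
    ((hf.mono (Icc_subset_Icc_right hu.2.le)).intervalIntegrable_of_Icc hu.1.le)
    ((hf.mono Ioo_subset_Icc_self).stronglyMeasurableAtFilter isOpen_Ioo u hu)
    (hf.continuousAt (Icc_mem_nhds hu.1 hu.2))

theorem le_mul_exp_integral_of_deriv_le {x x' a b : ℝ → ℝ} {s t : ℝ} (hst : s ≤ t)
    (hx : ContinuousOn x (Icc s t)) (ha : ContinuousOn a (Icc s t))
    (hb : ContinuousOn b (Icc s t)) (ha₀ : ∀ u ∈ Icc s t, 0 ≤ a u)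
    (hb₀ : ∀ u ∈ Icc s t, 0 ≤ b u) (hderiv : ∀ u ∈ Ioo s t, HasDerivAt x (x' u) u)
    (hineq : ∀ u ∈ Ioo s t, x' u ≤ a u * x u + b u) :
    x t ≤ (x s + ∫ u in s..t, b u) * exp (∫ u in s..t, a u) := by
  set I : ℝ → ℝ := fun u => ∫ v in s..u, a v
  set J : ℝ → ℝ := fun u => ∫ v in s..u, b v
  have hI₀ : ∀ u ∈ Icc s t, 0 ≤ I u := fun u hu =>
    intervalIntegral.integral_nonneg hu.1 fun v hv => ha₀ v ⟨hv.1, hv.2.trans hu.2⟩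
  have hF : AntitoneOn (fun u => x u * exp (-I u) - J u) (Icc s t) := by
    have hcont : ∀ f : ℝ → ℝ, ContinuousOn f (Icc s t) →
        ContinuousOn (fun u => ∫ v in s..u, f v) (Icc s t) := fun f hf => by
      rw [← uIcc_of_le hst] at hf ⊢
      exact intervalIntegral.continuousOn_primitive_interval hf.integrableOn_uIcc
    refine antitoneOn_of_hasDerivWithinAt_nonpos (convex_Icc s t)
      ((hx.mul ((hcont a ha).neg.rexp)).sub (hcont b hb)) (fun u hu => ?_) (fun u hu => ?_)
      (f' := fun u => (x' u - a u * x u) * exp (-I u) - b u)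
    · rw [interior_Icc] at hu ⊢
      have hI : HasDerivAt I (a u) u := hasDerivAt_integral_of_continuousOn_Icc ha hu
      have hJ : HasDerivAt J (b u) u := hasDerivAt_integral_of_continuousOn_Icc hb hu
      have := ((hderiv u hu).mul hI.neg.exp).sub hJ
      exact (this.congr_deriv (by simp only [Pi.neg_apply]; ring)).hasDerivWithinAt
    · rw [interior_Icc] at hu
      have hexp : exp (-I u) ≤ 1 :=
        exp_le_one_iff.mpr (neg_nonpos.mpr (hI₀ u (Ioo_subset_Icc_self hu)))
      have hb₀u := hb₀ u (Ioo_subset_Icc_self hu)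
      nlinarith [hineq u hu, exp_pos (-I u)]
  have hFts : x t * exp (-I t) - J t ≤ x s := by
    simpa [I, J] using hF ⟨le_rfl, hst⟩ ⟨hst, le_rfl⟩ hst
  calc x t = x t * exp (-I t) * exp (I t) := by
        rw [mul_assoc, ← exp_add, neg_add_cancel, exp_zero, mul_one]
    _ ≤ (x s + J t) * exp (I t) := by gcongr; linarith

theorem integral_le_integral_of_nonneg_of_mem_Icc {f : ℝ → ℝ} {p s t : ℝ} (hs : s ∈ Icc p t)
    (hf : ContinuousOn f (Icc p t)) (hf₀ : ∀ u ∈ Icc p t, 0 ≤ f u) :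
    ∫ u in s..t, f u ≤ ∫ u in p..t, f u :=
  intervalIntegral.integral_mono_interval hs.1 hs.2 le_rfl
    (ae_restrict_of_forall_mem measurableSet_Ioc fun u hu => hf₀ u (Ioc_subset_Icc_self hu))
    (hf.intervalIntegrable_of_Icc (hs.1.trans hs.2))

theorem le_mul_exp_of_integral_le {x x' a b : ℝ → ℝ} {p s t A B : ℝ} (hs : s ∈ Icc p t)
    (hx : ContinuousOn x (Icc p t)) (ha : ContinuousOn a (Icc p t))
    (hb : ContinuousOn b (Icc p t)) (hx₀ : 0 ≤ x s) (ha₀ : ∀ u ∈ Icc p t, 0 ≤ a u)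
    (hb₀ : ∀ u ∈ Icc p t, 0 ≤ b u) (hderiv : ∀ u ∈ Ioo p t, HasDerivAt x (x' u) u)
    (hineq : ∀ u ∈ Ioo p t, x' u ≤ a u * x u + b u)
    (hA : ∫ u in p..t, a u ≤ A) (hB : ∫ u in p..t, b u ≤ B) :
    x t ≤ (x s + B) * exp A := by
  have hsub : Icc s t ⊆ Icc p t := Icc_subset_Icc_left hs.1
  have hsub' : Ioo s t ⊆ Ioo p t := Ioo_subset_Ioo_left hs.1
  calc x t ≤ (x s + ∫ u in s..t, b u) * exp (∫ u in s..t, a u) :=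
        le_mul_exp_integral_of_deriv_le hs.2 (hx.mono hsub) (ha.mono hsub) (hb.mono hsub)
          (fun u hu => ha₀ u (hsub hu)) (fun u hu => hb₀ u (hsub hu))
          (fun u hu => hderiv u (hsub' hu)) (fun u hu => hineq u (hsub' hu))
    _ ≤ (x s + B) * exp A := by
      have hbB := (integral_le_integral_of_nonneg_of_mem_Icc hs hb hb₀).trans hB
      have haA := (integral_le_integral_of_nonneg_of_mem_Icc hs ha ha₀).trans hA
      have hb' : 0 ≤ ∫ u in s..t, b u :=
        intervalIntegral.integral_nonneg hs.2 fun u hu => hb₀ u (hsub hu)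
      have hxB : 0 ≤ x s + B := by linarith
      gcongr

/-- **Uniform Grönwall Lemma.** If `x' ≤ a x + b` on `(0,∞)` with `x, a, b`
nonnegative and continuous on `[0,∞)`, and the sliding-window integrals of `x, a, b` over
intervals of length `r` are bounded by `X, A, B` for all starting times `t ≥ t₀`, then
`x(t) ≤ (X/r + B) e^A` for all `t ≥ t₀ + r`. -/
theorem uniform_gronwall (x a b x' : ℝ → ℝ)
    (hxc : ContinuousOn x (Set.Ici 0)) (hac : ContinuousOn a (Set.Ici 0))
    (hbc : ContinuousOn b (Set.Ici 0))
    (hxnn : ∀ t, 0 ≤ t → 0 ≤ x t) (hann : ∀ t, 0 ≤ t → 0 ≤ a t)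
    (hbnn : ∀ t, 0 ≤ t → 0 ≤ b t)
    (hderiv : ∀ t, 0 < t → HasDerivAt x (x' t) t)
    (hineq : ∀ t, 0 < t → x' t ≤ a t * x t + b t)
    (r : ℝ) (hr : 0 < r) (t₀ : ℝ) (ht₀ : 0 ≤ t₀)
    (X A B : ℝ)
    (hXint : ∀ t, t₀ ≤ t → ∫ s in t..(t + r), x s ≤ X)
    (hAint : ∀ t, t₀ ≤ t → ∫ s in t..(t + r), a s ≤ A)
    (hBint : ∀ t, t₀ ≤ t → ∫ s in t..(t + r), b s ≤ B) :
    ∀ t, t₀ + r ≤ t → x t ≤ (X / r + B) * Real.exp A := by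
  intro t ht
  have ht₀' : t₀ ≤ t - r := by linarith
  have hsub : Icc (t - r) t ⊆ Ici 0 := fun u hu => ht₀.trans (ht₀'.trans hu.1)
  have hsub' : Ioo (t - r) t ⊆ Ioi 0 := fun u hu => ht₀.trans_lt (ht₀'.trans_lt hu.1)
  have hlow : ∀ s ∈ Icc (t - r) t, x t / exp A - B ≤ x s := fun s hs => by
    rw [sub_le_iff_le_add, div_le_iff₀ (exp_pos A)]
    exact le_mul_exp_of_integral_le hs (hxc.mono hsub) (hac.mono hsub) (hbc.mono hsub)
      (hxnn s (hsub hs)) (fun u hu => hann u (hsub hu)) (fun u hu => hbnn u (hsub hu))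
      (fun u hu => hderiv u (hsub' hu)) (fun u hu => hineq u (hsub' hu))
      (by simpa using hAint _ ht₀') (by simpa using hBint _ ht₀')
  have hmean : r * (x t / exp A - B) ≤ ∫ u in (t - r)..t, x u := by
    have : ∫ _ in (t - r)..t, x t / exp A - B ≤ ∫ u in (t - r)..t, x u :=
      intervalIntegral.integral_mono_on (by linarith) intervalIntegrable_const
        ((hxc.mono hsub).intervalIntegrable_of_Icc (by linarith)) hlow
    rwa [intervalIntegral.integral_const, sub_sub_cancel, smul_eq_mul] at this
  rw [← div_le_iff₀ (exp_pos A), ← sub_le_iff_le_add, le_div_iff₀' hr]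
  exact hmean.trans (by simpa using hXint _ ht₀')
end
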